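/- arXiv:1106.3453 — 5 statements merged into one kernel-verified Lean document; each statement's English description precedes it below -/
import Mathlib

section
/- Let G be a connected simple graph and k a positive integer. If G contains two vertex-disjoint cliques each of order k, then the locating chromatic number of G satisfies χ_L(G) ≥ k + 1. -/
open SimpleGraph

/-- The distance from a vertex to a set of vertices. -/
noncomputable def setDist {V : Type*} (G : SimpleGraph V) (v : V) (S : Set V) : ℕ :=
  sInf (G.dist v '' S)

/-- The color code of a vertex with respect to a `k`-coloring `c`:
the tuple of distances to the color classes. -/
noncomputable def colorCode {V : Type*} (G : SimpleGraph V) {k : ℕ} (c : V → Fin k)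
    (v : V) : Fin k → ℕ :=
  fun i => setDist G v (c ⁻¹' {i})

/-- `c` is a locating `k`-coloring of `G`: a proper coloring onto the `k` colors
such that distinct vertices have distinct color codes. -/
def IsLocatingColoring {V : Type*} (G : SimpleGraph V) {k : ℕ} (c : V → Fin k) : Prop :=
  Function.Surjective c ∧
  (∀ u v : V, G.Adj u v → c u ≠ c v) ∧
  Function.Injective (colorCode G c)

/-- The locating chromatic number: the least `k` admitting a locating `k`-coloring. -/
noncomputable def locatingChromaticNumber {V : Type*} (G : SimpleGraph V) : ℕ :=
  sInf {k : ℕ | ∃ c : V → Fin k, IsLocatingColoring G c}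

/-- A vertex is colorful w.r.t. a coloring `c` if every color appears in its
closed neighborhood. -/
def IsColorful {V : Type*} (G : SimpleGraph V) {k : ℕ} (c : V → Fin k) (v : V) : Prop :=
  ∀ i : Fin k, ∃ u : V, (u = v ∨ G.Adj v u) ∧ c u = i

lemma setDist_eq_zero_of_mem {V : Type*} (G : SimpleGraph V) {v : V} {S : Set V}
    (h : v ∈ S) : setDist G v S = 0 := by
  apply Nat.sInf_eq_zero.mpr
  exact Or.inl ⟨v, h, G.dist_self⟩

lemma colorCode_of_colorful {V : Type*} (G : SimpleGraph V) (hG : G.Connected) {k : ℕ}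
    (c : V → Fin k) {v : V} (hv : IsColorful G c v) :
    colorCode G c v = fun i => if i = c v then 0 else 1 := by
  funext i
  by_cases h : i = c v
  · simp only [h, if_pos rfl, colorCode]
    exact setDist_eq_zero_of_mem G (by simp [h])
  · simp only [if_neg h, colorCode, setDist]
    obtain ⟨u, hu, hcu⟩ := hv i
    have hadj : G.Adj v u := by
      rcases hu with rfl | hadj
      · exact absurd hcu.symm h
      · exact hadj
    have h1 : (1 : ℕ) ∈ G.dist v '' (c ⁻¹' {i}) :=
      ⟨u, by simpa using hcu, dist_eq_one_iff_adj.mpr hadj⟩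
    have hlb : ∀ n ∈ G.dist v '' (c ⁻¹' {i}), 1 ≤ n := by
      rintro n ⟨x, hx, rfl⟩
      have hne : v ≠ x := by
        rintro rfl
        exact h (Set.mem_preimage.mp hx : c v = i).symm
      exact hG.pos_dist_of_ne hne
    exact le_antisymm (Nat.sInf_le h1) (hlb _ (Nat.sInf_mem ⟨1, h1⟩))

lemma colorful_of_clique {V : Type*} (G : SimpleGraph V) {k : ℕ} (c : V → Fin k)
    {S : Finset V} (hS : G.IsClique (S : Set V)) (hsurj : ∀ i : Fin k, ∃ u ∈ S, c u = i)
    {v : V} (hv : v ∈ S) : IsColorful G c v := by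
  intro i
  obtain ⟨u, hu, hcu⟩ := hsurj i
  refine ⟨u, ?_, hcu⟩
  by_cases h : u = v
  · exact Or.inl h
  · exact Or.inr (hS hv hu (Ne.symm h))

/-- If a connected graph contains two disjoint cliques of order `k`,
then its locating chromatic number is at least `k + 1`. -/
theorem stmt1 {V : Type*} [Fintype V] (G : SimpleGraph V) (hG : G.Connected)
    (k : ℕ) (hk : 0 < k) (S T : Finset V) (hST : Disjoint S T)
    (hS : G.IsClique (S : Set V)) (hT : G.IsClique (T : Set V))
    (hScard : S.card = k) (hTcard : T.card = k) :
    k + 1 ≤ locatingChromaticNumber G := by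
  -- the set of admissible k is nonempty: injective coloring works
  have hne : ∃ m, ∃ c : V → Fin m, IsLocatingColoring G c := by
    refine ⟨Fintype.card V, (Fintype.equivFin V : V → Fin _), ?_, ?_, ?_⟩
    · exact (Fintype.equivFin V).surjective
    · intro u v huv
      exact fun h => G.ne_of_adj huv ((Fintype.equivFin V).injective h)
    · intro u w h
      have h0 : colorCode G (Fintype.equivFin V) u (Fintype.equivFin V u) = 0 :=
        setDist_eq_zero_of_mem G (by simp)
      have h1 : colorCode G (Fintype.equivFin V) w (Fintype.equivFin V u) = G.dist w u := by
        have : ((Fintype.equivFin V : V → Fin _) ⁻¹' {Fintype.equivFin V u}) = {u} := by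
          ext x; simp [Equiv.apply_eq_iff_eq]
        simp [colorCode, this, setDist]
      have : G.dist w u = 0 := by rw [← h1, ← h, h0]
      exact ((hG.dist_eq_zero_iff).mp this).symm
  refine le_csInf ⟨_, hne.choose_spec⟩ ?_
  rintro m ⟨c, hcsurj, hcprop, hcinj⟩
  by_contra hlt
  push_neg at hlt
  have hmk : m ≤ k := Nat.lt_succ_iff.mp hlt
  -- c is injective on cliques
  have injOn : ∀ (A : Finset V), G.IsClique (A : Set V) → Set.InjOn c (A : Set V) := by
    intro A hA x hx y hy hxy
    by_contra hne'
    exact hcprop x y (hA hx hy hne') hxy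
  -- clique of size k maps injectively into Fin m, so k ≤ m, hence m = k
  have hkm : k ≤ m := by
    have := Finset.card_le_card_of_injOn c (fun x _ => Finset.mem_univ (c x))
      (fun x hx y hy => injOn S hS hx hy)
    simpa [hScard] using this
  have hmeq : m = k := le_antisymm hmk hkm
  subst hmeq
  -- every color appears in S and in T
  have hsurjS : ∀ i : Fin m, ∃ u ∈ S, c u = i := by
    intro i
    have himg : S.image c = Finset.univ := by
      apply Finset.eq_univ_of_card
      rw [Finset.card_image_of_injOn (injOn S hS), hScard, Fintype.card_fin]
    have : i ∈ S.image c := himg ▸ Finset.mem_univ i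
    simpa [Finset.mem_image] using this
  have hsurjT : ∀ i : Fin m, ∃ u ∈ T, c u = i := by
    intro i
    have himg : T.image c = Finset.univ := by
      apply Finset.eq_univ_of_card
      rw [Finset.card_image_of_injOn (injOn T hT), hTcard, Fintype.card_fin]
    have : i ∈ T.image c := himg ▸ Finset.mem_univ i
    simpa [Finset.mem_image] using this
  -- pick same-colored vertices in S and T
  have hk' : 0 < m := hScard ▸ hk
  obtain ⟨v, hvS, hcv⟩ := hsurjS ⟨0, hk'⟩
  obtain ⟨w, hwT, hcw⟩ := hsurjT ⟨0, hk'⟩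
  have hvc : IsColorful G c v := colorful_of_clique G c hS hsurjS hvS
  have hwc : IsColorful G c w := colorful_of_clique G c hT hsurjT hwT
  have : colorCode G c v = colorCode G c w := by
    rw [colorCode_of_colorful G hG c hvc, colorCode_of_colorful G hG c hwc, hcv, hcw]
  have hvw : v = w := hcinj this
  exact (Finset.disjoint_left.mp hST hvS) (hvw ▸ hwT)
end

section
/- If G and H are connected simple graphs, then the locating chromatic number of their Cartesian product satisfies χ_L(G □ H) ≤ χ_L(G) · χ_L(H). -/
open SimpleGraph

/-!
Color `(a, b)` of `G □ H` by the pair of colors `(c_G a, c_H b)`. Its color classes are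
products of color classes, and distances in `G □ H` add up coordinatewise, so the code of
`(a, b)` at the color `(i, j)` is the code of `a` at `i` plus the code of `b` at `j`. Each
factor code vanishes at the vertex's own color, and this lets one recover both factor codes
from the sums.
-/

namespace SimpleGraph

variable {V W : Type*} {G : SimpleGraph V} {H : SimpleGraph W}

theorem dist_boxProd (hG : G.Preconnected) (hH : H.Preconnected) (x y : V × W) :
    (G □ H).dist x y = G.dist x.1 y.1 + H.dist x.2 y.2 := by
  rw [dist, dist, dist, edist_boxProd,
    ENat.toNat_add (edist_ne_top_iff_reachable.2 (hG _ _)) (edist_ne_top_iff_reachable.2 (hH _ _))]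

end SimpleGraph

section SetDist

variable {V W : Type*} {G : SimpleGraph V} {H : SimpleGraph W}

theorem setDist_le_dist {v x : V} {S : Set V} (hx : x ∈ S) : setDist G v S ≤ G.dist v x :=
  Nat.sInf_le ⟨x, hx, rfl⟩

theorem exists_mem_setDist_eq_dist (v : V) {S : Set V} (hS : S.Nonempty) :
    ∃ x ∈ S, setDist G v S = G.dist v x := by
  obtain ⟨x, hx, hdist⟩ := Nat.sInf_mem (hS.image (G.dist v))
  exact ⟨x, hx, hdist.symm⟩

theorem setDist_boxProd_prod (hG : G.Preconnected) (hH : H.Preconnected) (v : V) (w : W)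
    {A : Set V} {B : Set W} (hA : A.Nonempty) (hB : B.Nonempty) :
    setDist (G □ H) (v, w) (A ×ˢ B) = setDist G v A + setDist H w B := by
  apply le_antisymm
  · obtain ⟨a, ha, hda⟩ := exists_mem_setDist_eq_dist (G := G) v hA
    obtain ⟨b, hb, hdb⟩ := exists_mem_setDist_eq_dist (G := H) w hB
    calc setDist (G □ H) (v, w) (A ×ˢ B) ≤ (G □ H).dist (v, w) (a, b) :=
          setDist_le_dist (Set.mk_mem_prod ha hb)
      _ = setDist G v A + setDist H w B := by rw [dist_boxProd hG hH, hda, hdb]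
  · obtain ⟨⟨a, b⟩, hab, hdist⟩ :=
      exists_mem_setDist_eq_dist (G := G □ H) (v, w) (hA.prod hB)
    rw [hdist, dist_boxProd hG hH]
    exact add_le_add (setDist_le_dist hab.1) (setDist_le_dist hab.2)

end SetDist

theorem colorCode_apply_self {V : Type*} (G : SimpleGraph V) {k : ℕ} (c : V → Fin k) (v : V) :
    colorCode G c v (c v) = 0 :=
  Nat.eq_zero_of_le_zero <|
    (setDist_le_dist (S := c ⁻¹' {c v}) rfl).trans_eq SimpleGraph.dist_self

theorem eq_of_forall_add_eq_add {ι κ : Type*} {f f' : ι → ℕ} {g g' : κ → ℕ}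
    (h : ∀ i j, f i + g j = f' i + g' j) (hf : ∃ i, f i = 0) (hf' : ∃ i, f' i = 0) :
    g = g' := by
  obtain ⟨i, hi⟩ := hf
  obtain ⟨i', hi'⟩ := hf'
  funext j
  have := h i j
  have := h i' j
  omega

def prodColoring {V W : Type*} {m n : ℕ} (cG : V → Fin m) (cH : W → Fin n) :
    V × W → Fin (m * n) :=
  fun x => finProdFinEquiv (cG x.1, cH x.2)

section ProdColoring

variable {V W : Type*} {G : SimpleGraph V} {H : SimpleGraph W} {m n : ℕ}
  {cG : V → Fin m} {cH : W → Fin n}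

theorem preimage_prodColoring_singleton (i : Fin m) (j : Fin n) :
    prodColoring cG cH ⁻¹' {finProdFinEquiv (i, j)} = (cG ⁻¹' {i}) ×ˢ (cH ⁻¹' {j}) := by
  ext x
  simp [prodColoring]

theorem colorCode_prodColoring (hG : G.Preconnected) (hH : H.Preconnected)
    (hcG : Function.Surjective cG) (hcH : Function.Surjective cH)
    (v : V) (w : W) (i : Fin m) (j : Fin n) :
    colorCode (G □ H) (prodColoring cG cH) (v, w) (finProdFinEquiv (i, j)) =
      colorCode G cG v i + colorCode H cH w j := by
  rw [colorCode, preimage_prodColoring_singleton]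
  exact setDist_boxProd_prod hG hH v w (hcG i) (hcH j)

theorem IsLocatingColoring.boxProd (hG : G.Preconnected) (hH : H.Preconnected)
    (hcG : IsLocatingColoring G cG) (hcH : IsLocatingColoring H cH) :
    IsLocatingColoring (G □ H) (prodColoring cG cH) := by
  obtain ⟨hsurjG, hproperG, hinjG⟩ := hcG
  obtain ⟨hsurjH, hproperH, hinjH⟩ := hcH
  refine ⟨?surjective, ?proper, ?injective⟩
  case surjective =>
    intro k
    obtain ⟨a, ha⟩ := hsurjG (finProdFinEquiv.symm k).1
    obtain ⟨b, hb⟩ := hsurjH (finProdFinEquiv.symm k).2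
    exact ⟨(a, b), by simp only [prodColoring, ha, hb, Prod.mk.eta, Equiv.apply_symm_apply]⟩
  case proper =>
    rintro ⟨a, b⟩ ⟨a', b'⟩ hadj hcolor
    simp only [prodColoring, EmbeddingLike.apply_eq_iff_eq, Prod.mk.injEq] at hcolor
    rcases boxProd_adj.1 hadj with ⟨hadjG, -⟩ | ⟨hadjH, -⟩
    · exact hproperG _ _ hadjG hcolor.1
    · exact hproperH _ _ hadjH hcolor.2
  case injective =>
    rintro ⟨v, w⟩ ⟨v', w'⟩ hcode
    have hsum : ∀ i j, colorCode G cG v i + colorCode H cH w j =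
        colorCode G cG v' i + colorCode H cH w' j := fun i j => by
      rw [← colorCode_prodColoring hG hH hsurjG hsurjH,
        ← colorCode_prodColoring hG hH hsurjG hsurjH, hcode]
    have hcodeH : colorCode H cH w = colorCode H cH w' :=
      eq_of_forall_add_eq_add hsum ⟨_, colorCode_apply_self G cG v⟩
        ⟨_, colorCode_apply_self G cG v'⟩
    have hcodeG : colorCode G cG v = colorCode G cG v' :=
      eq_of_forall_add_eq_add (fun j i => by rw [add_comm, hsum, add_comm])
        ⟨_, colorCode_apply_self H cH w⟩ ⟨_, colorCode_apply_self H cH w'⟩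
    rw [hinjG hcodeG, hinjH hcodeH]

end ProdColoring

section Existence

variable {V : Type*} {G : SimpleGraph V}

theorem isLocatingColoring_of_equiv (hG : G.Preconnected) {k : ℕ} (e : V ≃ Fin k) :
    IsLocatingColoring G e := by
  refine ⟨e.surjective, fun u v hadj hcolor => G.ne_of_adj hadj (e.injective hcolor), ?_⟩
  intro u v hcode
  have hclass : ⇑e ⁻¹' {e u} = {u} := by
    ext x
    simp
  have hdist : G.dist v u = 0 := by
    have := congrFun hcode (e u)
    rwa [colorCode_apply_self, colorCode, hclass, setDist, Set.image_singleton, csInf_singleton,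
      eq_comm] at this
  exact ((hG v u).dist_eq_zero_iff.1 hdist).symm

theorem exists_isLocatingColoring_locatingChromaticNumber [Finite V] (hG : G.Preconnected) :
    ∃ c : V → Fin (locatingChromaticNumber G), IsLocatingColoring G c := by
  obtain ⟨k, ⟨e⟩⟩ := Finite.exists_equiv_fin V
  exact Nat.sInf_mem (s := {k | ∃ c : V → Fin k, IsLocatingColoring G c})
    ⟨k, e, isLocatingColoring_of_equiv hG e⟩

end Existence

/-- For connected graphs `G` and `H`,
`χ_L(G □ H) ≤ χ_L(G) * χ_L(H)`. -/
theorem stmt2 {V W : Type*} [Fintype V] [Fintype W]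
    (G : SimpleGraph V) (H : SimpleGraph W)
    (hG : G.Connected) (hH : H.Connected) :
    locatingChromaticNumber (G □ H) ≤
      locatingChromaticNumber G * locatingChromaticNumber H := by
  obtain ⟨cG, hcG⟩ := exists_isLocatingColoring_locatingChromaticNumber hG.preconnected
  obtain ⟨cH, hcH⟩ := exists_isLocatingColoring_locatingChromaticNumber hH.preconnected
  exact Nat.sInf_le ⟨_, hcG.boxProd hG.preconnected hH.preconnected hcH⟩
end

section
/- For all integers m, n ≥ 2, every proper 3-coloring of the grid P_m □ P_n fails to be a locating coloring; equivalently, χ_L(P_m □ P_n) ≥ 4. -/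
/-!
In a connected graph, a vertex whose closed neighbourhood sees every color has color code
`0` at its own color and `1` elsewhere, so in a locating coloring two such colorful vertices
never share a color. With three colors this forces both diagonals of every 4-cycle to be
monochromatic: otherwise two opposite corners are colorful and have the same color. In the
grid, the unit squares then make the coloring depend only on the parity of `i + j`, so only
two colors occur. With at most two colors every non-isolated vertex is colorful, which
already fails for the ends of the path `(0,0) - (1,0) - (1,1)`.
-/

open SimpleGraph

section ColorCode

variable {V : Type*} {G : SimpleGraph V} {k : ℕ} {c : V → Fin k}

theorem colorCode_eq_zero_iff (hG : G.Connected) (hc : Function.Surjective c) (v : V)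
    (i : Fin k) : colorCode G c v i = 0 ↔ c v = i := by
  simp only [colorCode, setDist, Nat.sInf_eq_zero, Set.mem_image, Set.mem_preimage,
    Set.mem_singleton_iff, hG.dist_eq_zero_iff, Set.image_eq_empty]
  constructor
  · rintro (⟨x, hx, rfl⟩ | hempty)
    · exact hx
    · obtain ⟨x, hx⟩ := hc i
      exact absurd hx (Set.eq_empty_iff_forall_notMem.mp hempty x)
  · exact fun h => .inl ⟨v, h, rfl⟩

theorem colorCode_of_isColorful (hG : G.Connected) {v : V} (hv : IsColorful G c v) :
    colorCode G c v = fun i => if i = c v then 0 else 1 := by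
  funext i
  split_ifs with h
  · exact Nat.sInf_eq_zero.mpr (.inl ⟨v, h.symm, G.dist_self⟩)
  · obtain ⟨u, hu | hvu, rfl⟩ := hv i
    · exact absurd (congrArg c hu) h
    have h1 : 1 ∈ G.dist v '' (c ⁻¹' {c u}) := ⟨u, rfl, G.dist_eq_one_iff_adj.mpr hvu⟩
    refine le_antisymm (Nat.sInf_le h1) (le_csInf ⟨1, h1⟩ ?_)
    rintro _ ⟨x, hx, rfl⟩
    exact hG.pos_dist_of_ne fun hvx => h (hvx ▸ hx).symm

theorem isLocatingColoring_of_bijective (hG : G.Connected) (hc : Function.Bijective c) :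
    IsLocatingColoring G c := by
  refine ⟨hc.2, fun u v huv h => huv.ne (hc.1 h), fun u v huv => hc.1 ?_⟩
  rw [← colorCode_eq_zero_iff hG hc.2, huv, colorCode_eq_zero_iff hG hc.2]

theorem IsLocatingColoring.eq_of_isColorful (hG : G.Connected) (hc : IsLocatingColoring G c)
    {u v : V} (hu : IsColorful G c u) (hv : IsColorful G c v) (huv : c u = c v) : u = v :=
  hc.2.2 <| by rw [colorCode_of_isColorful hG hu, colorCode_of_isColorful hG hv, huv]

end ColorCode

section FewColors

variable {V : Type*} {G : SimpleGraph V}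

theorem isColorful_of_adj_fin_two {c : V → Fin 2} {v u : V} (hvu : G.Adj v u)
    (hc : c u ≠ c v) : IsColorful G c v := by
  intro i
  obtain h | h : i = c v ∨ i = c u := by omega
  exacts [⟨v, .inl rfl, h.symm⟩, ⟨u, .inr hvu, h.symm⟩]

theorem isColorful_of_adj_of_adj_fin_three {c : V → Fin 3} {v u w : V} (hvu : G.Adj v u)
    (hvw : G.Adj v w) (hu : c u ≠ c v) (hw : c w ≠ c v) (huw : c u ≠ c w) :
    IsColorful G c v := by
  intro i
  obtain h | h | h : i = c v ∨ i = c u ∨ i = c w := by omega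
  exacts [⟨v, .inl rfl, h.symm⟩, ⟨u, .inr hvu, h.symm⟩, ⟨w, .inr hvw, h.symm⟩]

theorem IsLocatingColoring.eq_of_adj_of_adj {k : ℕ} {c : V → Fin k} (hG : G.Connected)
    (hc : IsLocatingColoring G c) (hk : k ≤ 2) {u v w : V} (huv : G.Adj u v)
    (hvw : G.Adj v w) : u = w := by
  obtain rfl | rfl | rfl : k = 0 ∨ k = 1 ∨ k = 2 := by omega
  · exact (c u).elim0
  · exact absurd (Subsingleton.elim _ _) (hc.2.1 u v huv)
  · have hvu := hc.2.1 v u huv.symm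
    have hvw' := hc.2.1 v w hvw
    exact hc.eq_of_isColorful hG (isColorful_of_adj_fin_two huv hvu)
      (isColorful_of_adj_fin_two hvw.symm hvw') (by omega)

theorem IsLocatingColoring.color_eq_of_cycle4 {c : V → Fin 3} (hG : G.Connected)
    (hc : IsLocatingColoring G c) {p q r s : V} (hpq : G.Adj p q) (hqr : G.Adj q r)
    (hrs : G.Adj r s) (hsp : G.Adj s p) (hqs : q ≠ s) : c p = c r := by
  have proper := hc.2.1
  by_contra hpr
  have hq := isColorful_of_adj_of_adj_fin_three hqr hpq.symm (proper q r hqr).symm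
    (proper p q hpq) (Ne.symm hpr)
  have hs := isColorful_of_adj_of_adj_fin_three hsp hrs.symm (proper s p hsp).symm
    (proper r s hrs) hpr
  refine hqs (hc.eq_of_isColorful hG hq hs ?_)
  -- otherwise `c p` and `c r` both avoid the two distinct colors `c q`, `c s` of `Fin 3`
  by_contra hqs'
  have := proper p q hpq; have := proper q r hqr
  have := proper r s hrs; have := proper s p hsp
  omega

end FewColors

theorem grid_eq_of_checkerboard_squares {α : Type*} {m n : ℕ} (hm : 2 ≤ m) (hn : 2 ≤ n)
    (f : Fin m × Fin n → α)
    (hsq : ∀ (i j : ℕ) (hi : i + 1 < m) (hj : j + 1 < n),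
      f (⟨i, by omega⟩, ⟨j, by omega⟩) = f (⟨i + 1, hi⟩, ⟨j + 1, hj⟩) ∧
      f (⟨i + 1, hi⟩, ⟨j, by omega⟩) = f (⟨i, by omega⟩, ⟨j + 1, hj⟩))
    (i j : ℕ) (hi : i < m) (hj : j < n) :
    f (⟨i, hi⟩, ⟨j, hj⟩) =
      if (i + j) % 2 = 0 then f (⟨0, by omega⟩, ⟨0, by omega⟩)
      else f (⟨1, hm⟩, ⟨0, by omega⟩) := by
  induction j generalizing i with
  | zero =>
    induction i using Nat.strong_induction_on with
    | _ i ih =>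
      match i with
      | 0 => rfl
      | 1 => rfl
      | i + 2 =>
        rw [(hsq (i + 1) 0 hi hn).2, ← (hsq i 0 (by omega) hn).1, ih i (by omega) (by omega)]
        simp [Nat.add_mod_right]
  | succ j ih =>
    by_cases hi' : i + 1 < m
    · rw [← (hsq i j hi' hj).2, ih (i + 1) hi' (by omega)]
      simp only [show (i + 1 + j) % 2 = (i + (j + 1)) % 2 by omega]
    · obtain ⟨i, rfl⟩ : ∃ i', i = i' + 1 := ⟨i - 1, by omega⟩
      rw [← (hsq i j hi hj).1, ih i (by omega) (by omega)]
      simp only [show (i + j) % 2 = (i + 1 + (j + 1)) % 2 by omega]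

theorem boxProd_pathGraph_connected {m n : ℕ} (hm : 0 < m) (hn : 0 < n) :
    (pathGraph m □ pathGraph n).Connected := by
  obtain ⟨m, rfl⟩ := Nat.exists_eq_add_one.mpr hm
  obtain ⟨n, rfl⟩ := Nat.exists_eq_add_one.mpr hn
  exact connected_boxProd.mpr ⟨pathGraph_connected m, pathGraph_connected n⟩

theorem boxProd_pathGraph_adj_succ_left {m n i : ℕ} (hi : i + 1 < m) (j : Fin n) :
    (pathGraph m □ pathGraph n).Adj (⟨i, by omega⟩, j) (⟨i + 1, hi⟩, j) :=
  boxProd_adj_left.mpr (pathGraph_adj.mpr (.inl rfl))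

theorem boxProd_pathGraph_adj_succ_right {m n j : ℕ} (i : Fin m) (hj : j + 1 < n) :
    (pathGraph m □ pathGraph n).Adj (i, ⟨j, by omega⟩) (i, ⟨j + 1, hj⟩) :=
  boxProd_adj_right.mpr (pathGraph_adj.mpr (.inl rfl))

theorem not_isLocatingColoring_boxProd_pathGraph_fin_three {m n : ℕ} (hm : 2 ≤ m)
    (hn : 2 ≤ n) (c : Fin m × Fin n → Fin 3) :
    ¬ IsLocatingColoring (pathGraph m □ pathGraph n) c := by
  intro hc
  have hG := boxProd_pathGraph_connected (m := m) (n := n) (by omega) (by omega)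
  have hparity := grid_eq_of_checkerboard_squares hm hn c fun i j hi hj => by
    have hpq := boxProd_pathGraph_adj_succ_left hi (⟨j, by omega⟩ : Fin n)
    have hqr := boxProd_pathGraph_adj_succ_right ⟨i + 1, hi⟩ hj
    have hrs := (boxProd_pathGraph_adj_succ_left hi ⟨j + 1, hj⟩).symm
    have hsp := (boxProd_pathGraph_adj_succ_right (⟨i, by omega⟩ : Fin m) hj).symm
    exact ⟨hc.color_eq_of_cycle4 hG hpq hqr hrs hsp (by simp),
      hc.color_eq_of_cycle4 hG hqr hrs hsp hpq (by simp)⟩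
  obtain ⟨t, ht⟩ : ∃ t : Fin 3,
      t ≠ c (⟨0, by omega⟩, ⟨0, by omega⟩) ∧ t ≠ c (⟨1, hm⟩, ⟨0, by omega⟩) := by
    generalize c _ = a, c _ = b
    revert a b
    decide
  obtain ⟨⟨⟨i, hi⟩, ⟨j, hj⟩⟩, hij⟩ := hc.1 t
  rw [hparity i j hi hj] at hij
  split_ifs at hij
  exacts [ht.1 hij.symm, ht.2 hij.symm]

/-- For `m, n ≥ 2`, every proper `3`-coloring of `P_m □ P_n` fails to
be a locating coloring; equivalently `χ_L(P_m □ P_n) ≥ 4`. -/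
theorem stmt4 (m n : ℕ) (hm : 2 ≤ m) (hn : 2 ≤ n) :
    (∀ c : Fin m × Fin n → Fin 3,
      (∀ u v, (pathGraph m □ pathGraph n).Adj u v → c u ≠ c v) →
      ¬ IsLocatingColoring (pathGraph m □ pathGraph n) c) ∧
    4 ≤ locatingChromaticNumber (pathGraph m □ pathGraph n) := by
  have hG := boxProd_pathGraph_connected (m := m) (n := n) (by omega) (by omega)
  refine ⟨fun c _ => not_isLocatingColoring_boxProd_pathGraph_fin_three hm hn c,
    le_csInf ⟨_, _, isLocatingColoring_of_bijective hG (Fintype.equivFin _).bijective⟩ ?_⟩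
  rintro k ⟨c, hc⟩
  by_contra! hk
  obtain hk | rfl : k ≤ 2 ∨ k = 3 := by omega
  · have h := hc.eq_of_adj_of_adj hG hk
      (boxProd_pathGraph_adj_succ_left (i := 0) hm ⟨0, by omega⟩)
      (boxProd_pathGraph_adj_succ_right ⟨1, hm⟩ (j := 0) hn)
    simp at h
  · exact not_isLocatingColoring_boxProd_pathGraph_fin_three hm hn c hc
end

section
/- Let m and n be integers with 2 ≤ m ≤ n and n ≥ 3, and suppose c is a locating (n+1)-coloring of K_m □ K_n (vertices indexed by pairs (i,j) with i ∈ {1,...,m}, j ∈ {1,...,n}, where each row {(i,j) : 1 ≤ j ≤ n} induces K_n and each column induces K_m). Then any two distinct rows have different missing colors; that is, for all i ≠ i', there is no color absent from both row i and row i'. -/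
open SimpleGraph

namespace Stmt10Aux

variable {m n : ℕ}

abbrev GG (m n : ℕ) : SimpleGraph (Fin m × Fin n) :=
  (⊤ : SimpleGraph (Fin m)) □ (⊤ : SimpleGraph (Fin n))

lemma adj_iff (u v : Fin m × Fin n) :
    (GG m n).Adj u v ↔ (u.1 ≠ v.1 ∧ u.2 = v.2) ∨ (u.2 ≠ v.2 ∧ u.1 = v.1) := by
  rw [SimpleGraph.boxProd_adj]
  simp [and_comm]

lemma preconn : (GG m n).Preconnected := by
  intro u v
  by_cases h1 : u.1 = v.1
  · by_cases h2 : u.2 = v.2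
    · rw [show u = v from Prod.ext h1 h2]
    · exact Adj.reachable ((adj_iff u v).mpr (Or.inr ⟨h2, h1⟩))
  · by_cases h2 : u.2 = v.2
    · exact Adj.reachable ((adj_iff u v).mpr (Or.inl ⟨h1, h2⟩))
    · have a1 : (GG m n).Adj u (v.1, u.2) := (adj_iff _ _).mpr (Or.inl ⟨h1, rfl⟩)
      have a2 : (GG m n).Adj (v.1, u.2) v := (adj_iff _ _).mpr (Or.inr ⟨h2, rfl⟩)
      exact a1.reachable.trans a2.reachable

lemma dist_eq_two {u v : Fin m × Fin n} (hne : u ≠ v) (hadj : ¬ (GG m n).Adj u v) :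
    (GG m n).dist u v = 2 := by
  have h1 : u.1 ≠ v.1 := by
    intro h
    exact hadj ((adj_iff u v).mpr (Or.inr ⟨fun h2 => hne (Prod.ext h h2), h⟩))
  have h2 : u.2 ≠ v.2 := by
    intro h
    exact hadj ((adj_iff u v).mpr (Or.inl ⟨h1, h⟩))
  have a1 : (GG m n).Adj u (v.1, u.2) := (adj_iff _ _).mpr (Or.inl ⟨h1, rfl⟩)
  have a2 : (GG m n).Adj (v.1, u.2) v := (adj_iff _ _).mpr (Or.inr ⟨h2, rfl⟩)
  have hle : (GG m n).dist u v ≤ 2 := by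
    simpa using SimpleGraph.dist_le (Walk.cons a1 (Walk.cons a2 Walk.nil))
  have h0 : (GG m n).dist u v ≠ 0 := fun h => hne ((preconn u v).dist_eq_zero_iff.mp h)
  have hone : (GG m n).dist u v ≠ 1 := fun h => hadj (SimpleGraph.dist_eq_one_iff_adj.mp h)
  omega

variable {c : Fin m × Fin n → Fin (n + 1)}

open scoped Classical

/-- Evaluation of code entries. -/
lemma codeVal (hsurj : Function.Surjective c)
    (hprop : ∀ u v : Fin m × Fin n, (GG m n).Adj u v → c u ≠ c v)
    (u : Fin m × Fin n) (s : Fin (n + 1)) :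
    colorCode (GG m n) c u s =
      if c u = s then 0 else if ∃ w, (GG m n).Adj u w ∧ c w = s then 1 else 2 := by
  classical
  unfold colorCode setDist
  split_ifs with h1 h2
  · have : (0 : ℕ) ∈ (GG m n).dist u '' (c ⁻¹' {s}) := ⟨u, by simp [h1], by simp⟩
    exact Nat.eq_zero_of_le_zero (Nat.sInf_le this)
  · obtain ⟨w, hw, hws⟩ := h2
    apply le_antisymm
    · exact Nat.sInf_le ⟨w, by simp [hws], SimpleGraph.dist_eq_one_iff_adj.mpr hw⟩
    · refine le_csInf ⟨_, ⟨w, by simp [hws], rfl⟩⟩ ?_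
      rintro d ⟨z, hz, rfl⟩
      have : u ≠ z := fun h => h1 (by simpa [h] using hz)
      have := (preconn u z).dist_eq_zero_iff.not.mpr this
      omega
  · obtain ⟨z, hz⟩ := hsurj s
    apply le_antisymm
    · refine Nat.sInf_le ⟨z, by simp [hz], ?_⟩
      have hne : u ≠ z := fun h => h1 (h ▸ hz)
      have hnadj : ¬ (GG m n).Adj u z := fun h => h2 ⟨z, h, hz⟩
      exact dist_eq_two hne hnadj
    · refine le_csInf ⟨_, ⟨z, by simp [hz], rfl⟩⟩ ?_
      rintro d ⟨w, hw, rfl⟩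
      have hwm : c w = s := hw
      have hne : u ≠ w := fun h => h1 (h ▸ hwm)
      have hnadj : ¬ (GG m n).Adj u w := fun h => h2 ⟨w, h, hwm⟩
      rw [dist_eq_two hne hnadj]

/-- neighbors with a given color, in terms of rows/columns. -/
lemma adjExists {u : Fin m × Fin n} {s : Fin (n + 1)} (hus : c u ≠ s) :
    (∃ w, (GG m n).Adj u w ∧ c w = s) ↔
      (∃ j : Fin n, c (u.1, j) = s) ∨ (∃ r : Fin m, c (r, u.2) = s) := by
  constructor
  · rintro ⟨⟨w1, w2⟩, hadj, hw⟩
    rcases (adj_iff u (w1, w2)).mp hadj with ⟨h1, h2⟩ | ⟨h2, h1⟩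
    · simp only at h1 h2
      subst h2
      exact Or.inr ⟨w1, hw⟩
    · simp only at h1 h2
      subst h1
      exact Or.inl ⟨w2, hw⟩
  · rintro (⟨j, hj⟩ | ⟨r, hr⟩)
    · refine ⟨(u.1, j), (adj_iff _ _).mpr (Or.inr ⟨?_, rfl⟩), hj⟩
      intro h
      apply hus
      rw [← hj]
      exact congrArg c (Prod.ext rfl h)
    · refine ⟨(r, u.2), (adj_iff _ _).mpr (Or.inl ⟨?_, rfl⟩), hr⟩
      intro h
      apply hus
      rw [← hr]
      exact congrArg c (Prod.ext h rfl)

/-- Key lemma: two distinct same-colored vertices whose neighborhoods see the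
same colors would have the same code. -/
lemma keyL (hc : IsLocatingColoring (GG m n) c) {u v : Fin m × Fin n} (huv : u ≠ v)
    (htc : c u = c v)
    (hiff : ∀ s, s ≠ c u → ((∃ w, (GG m n).Adj u w ∧ c w = s) ↔ (∃ w, (GG m n).Adj v w ∧ c w = s))) :
    False := by
  obtain ⟨hsurj, hprop, hinj⟩ := hc
  apply huv
  apply hinj
  funext s
  rw [codeVal hsurj hprop, codeVal hsurj hprop]
  by_cases h : s = c u
  · simp [h.symm, htc ▸ h.symm]
  · have h' : ¬ (c u = s) := fun hh => h hh.symm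
    have h'' : ¬ (c v = s) := fun hh => h (htc ▸ hh.symm)
    rw [if_neg h', if_neg h'']
    by_cases he : ∃ w, (GG m n).Adj u w ∧ c w = s
    · rw [if_pos he, if_pos ((hiff s h).mp he)]
    · rw [if_neg he, if_neg (fun hh => he ((hiff s h).mpr hh))]

/-- pigeonhole: an injective row map avoiding x attains every other color -/
lemma row_pigeon {f : Fin n → Fin (n + 1)} (hf : Function.Injective f)
    {x : Fin (n + 1)} (hx : ∀ j, f j ≠ x) {s : Fin (n + 1)} (hs : s ≠ x) :
    ∃ j, f j = s := by
  by_contra h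
  push_neg at h
  have hsub : Finset.univ.image f ⊆ (Finset.univ.erase x).erase s := by
    intro t ht
    obtain ⟨j, _, rfl⟩ := Finset.mem_image.mp ht
    exact Finset.mem_erase.mpr ⟨h j, Finset.mem_erase.mpr ⟨hx j, Finset.mem_univ _⟩⟩
  have h1 : (Finset.univ.image f).card = n := by
    rw [Finset.card_image_of_injective _ hf, Finset.card_univ, Fintype.card_fin]
  have h2 : ((Finset.univ.erase x).erase s).card = n - 1 := by
    rw [Finset.card_erase_of_mem (Finset.mem_erase.mpr ⟨hs, Finset.mem_univ _⟩),
      Finset.card_erase_of_mem (Finset.mem_univ _), Finset.card_univ, Fintype.card_fin]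
    omega
  have := Finset.card_le_card hsub
  omega

lemma exists_missing {f : Fin n → Fin (n + 1)} (hf : Function.Injective f) :
    ∃ y, ∀ j, f j ≠ y := by
  by_contra h
  push_neg at h
  have hs : Function.Surjective f := fun y => h y
  have := Fintype.card_le_of_surjective f hs
  simp at this

end Stmt10Aux

open Stmt10Aux

/-- In any locating `(n+1)`-coloring of `K_m □ K_n`
(`2 ≤ m ≤ n`, `n ≥ 3`), any two distinct rows have different missing colors. -/
theorem stmt10 (m n : ℕ) (hm : 2 ≤ m) (hmn : m ≤ n) (hn : 3 ≤ n)
    (c : Fin m × Fin n → Fin (n + 1))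
    (hc : IsLocatingColoring
      ((⊤ : SimpleGraph (Fin m)) □ (⊤ : SimpleGraph (Fin n))) c)
    (i i' : Fin m) (hii' : i ≠ i') :
    ¬ ∃ x : Fin (n + 1), (∀ j : Fin n, c (i, j) ≠ x) ∧ (∀ j : Fin n, c (i', j) ≠ x) := by
  rintro ⟨x, hxi, hxi'⟩
  have hprop := hc.2.1
  -- row injectivity
  have rowinj : ∀ r : Fin m, Function.Injective (fun j => c (r, j)) := by
    intro r j j' h
    by_contra hne
    exact hprop (r, j) (r, j') ((adj_iff _ _).mpr (Or.inr ⟨hne, rfl⟩)) h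
  -- x occurs somewhere
  obtain ⟨⟨r, j₀⟩, hrj0⟩ := hc.1 x
  have hri : r ≠ i := fun h => hxi j₀ (by rw [← h]; exact hrj0)
  have hri' : r ≠ i' := fun h => hxi' j₀ (by rw [← h]; exact hrj0)
  -- missing color of row r
  obtain ⟨y, hy⟩ := exists_missing (rowinj r)
  have hyx : y ≠ x := fun h => hy j₀ (by rw [h]; exact hrj0)
  -- full rows
  have rowfull_i : ∀ s, s ≠ x → ∃ j, c (i, j) = s := fun s hs => row_pigeon (rowinj i) hxi hs
  have rowfull_i' : ∀ s, s ≠ x → ∃ j, c (i', j) = s := fun s hs => row_pigeon (rowinj i') hxi' hs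
  have rowfull_r : ∀ s, s ≠ y → ∃ j, c (r, j) = s := fun s hs => row_pigeon (rowinj r) hy hs
  -- L1 : matched colors in rows i, i' : x-occupancy of the two columns must differ
  have L1 : ∀ p p' : Fin n, c (i, p) = c (i', p') →
      ((∃ r2, c (r2, p) = x) ↔ (∃ r2, c (r2, p') = x)) → False := by
    intro p p' hpp' hiffx
    refine keyL hc (u := (i, p)) (v := (i', p'))
      (fun h => hii' (congrArg Prod.fst h)) hpp' ?_
    intro s hs
    rw [adjExists (fun h => hs h.symm), adjExists (fun h => hs (hpp' ▸ h).symm)]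
    by_cases hsx : s = x
    · subst hsx
      constructor
      · rintro (⟨j, hj⟩ | h)
        · exact absurd hj (hxi j)
        · exact Or.inr (hiffx.mp h)
      · rintro (⟨j, hj⟩ | h)
        · exact absurd hj (hxi' j)
        · exact Or.inr (hiffx.mpr h)
    · exact iff_of_true (Or.inl (rowfull_i s hsx)) (Or.inl (rowfull_i' s hsx))
  -- L2 : matched colors in a row missing x and row r
  have L2 : ∀ (ii : Fin m), (∀ j, c (ii, j) ≠ x) → ii ≠ r → ∀ p q : Fin n,
      c (ii, p) = c (r, q) → (∃ r2, c (r2, p) = x) → (∃ r2, c (r2, q) = y) → False := by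
    intro ii hmiss hir p q hpq hxp hyq
    refine keyL hc (u := (ii, p)) (v := (r, q))
      (fun h => hir (congrArg Prod.fst h)) hpq ?_
    intro s hs
    rw [adjExists (fun h => hs h.symm), adjExists (fun h => hs (hpq ▸ h).symm)]
    refine iff_of_true ?_ ?_
    · by_cases hsx : s = x
      · exact Or.inr (hsx ▸ hxp)
      · exact Or.inl (row_pigeon (rowinj ii) hmiss hsx)
    · by_cases hsy : s = y
      · exact Or.inr (hsy ▸ hyq)
      · exact Or.inl (rowfull_r s hsy)
  -- main claim : every column other than j₀ is y-free
  have hclaim : ∀ j : Fin n, j ≠ j₀ → ∀ r2, c (r2, j) ≠ y := by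
    intro j hj r2 hr2y
    have htx : c (r, j) ≠ x := fun h => hj (rowinj r (show c (r, j) = c (r, j₀) from h.trans hrj0.symm))
    obtain ⟨p, hp⟩ := rowfull_i (c (r, j)) htx
    obtain ⟨p', hp'⟩ := rowfull_i' (c (r, j)) htx
    by_cases hxp : ∃ r3, c (r3, p) = x
    · exact L2 i hxi hri.symm p j hp hxp ⟨r2, hr2y⟩
    · by_cases hxp' : ∃ r3, c (r3, p') = x
      · exact L2 i' hxi' hri'.symm p' j hp' hxp' ⟨r2, hr2y⟩
      · exact L1 p p' (hp.trans hp'.symm) (iff_of_false hxp hxp')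
  -- but y occurs in rows i and i' in two distinct columns
  obtain ⟨a, ha⟩ := rowfull_i y hyx
  obtain ⟨b, hb⟩ := rowfull_i' y hyx
  have hab : a ≠ b := by
    intro h
    subst h
    exact hprop (i, a) (i', a) ((adj_iff _ _).mpr (Or.inl ⟨hii', rfl⟩)) (ha.trans hb.symm)
  by_cases haj : a = j₀
  · exact hclaim b (fun h => hab (haj.trans h.symm)) i' hb
  · exact hclaim a haj i ha
end

section
/- Let m and n be integers with 2 ≤ m ≤ n and n ≥ 3, and let m_0 = max{k ∈ ℕ : k(k−1) − 1 ≤ n}. If m ≤ m_0 − 1, then the locating chromatic number of K_m □ K_n equals n + 1. -/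
open SimpleGraph

namespace Stmt11

attribute [local instance] Classical.propDecidable

def mem1 (a c : ℕ) : ℕ := if c < a then a - 1 else a
def phiv (m s t : ℕ) : ℕ := m + s * (m - 1) + t
def dlt (m p b : ℕ) : ℕ := if p < b then b - p else b + m - p
def sv (m x p b : ℕ) : ℕ := if dlt m p b ≤ x then x - dlt m p b else x + m - dlt m p b
def kv (m x p b : ℕ) : ℕ := p - (if x < p then 1 else 0) - (if sv m x p b < p then 1 else 0)
def tv (m x p b : ℕ) : ℕ :=
  if kv m x p b < mem1 x (sv m x p b) then kv m x p b else kv m x p b + 1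
def forv (m x p b : ℕ) : ℕ := phiv m (sv m x p b) (tv m x p b)
def gv (u x jj : ℕ) : ℕ := if x + 1 + jj < u then x + 1 + jj else x + 1 + jj - u

def kol (m n x j : ℕ) : ℕ :=
  if j < m * m then
    if j / m = j % m then
      (if x = j / m then m * m + x else phiv m (j / m) (mem1 x (j / m)))
    else if x = j % m then j / m
    else if x = j / m then phiv m (j / m) (mem1 (j % m) (j / m))
    else forv m x (j / m) (j % m)
  else m * m + gv (n + 1 - m * m) x (j - m * m)

section facts
variable {m x p b : ℕ}

lemma dlt_bnd (hp : p < m) (hb : b < m) (hpb : p ≠ b) :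
    1 ≤ dlt m p b ∧ dlt m p b < m := by unfold dlt; split_ifs <;> omega

lemma sv_lt (hx : x < m) (hp : p < m) (hb : b < m) (hpb : p ≠ b) : sv m x p b < m := by
  have := dlt_bnd hp hb hpb; unfold sv; split_ifs <;> omega

lemma sv_ne_x (hx : x < m) (hp : p < m) (hb : b < m) (hpb : p ≠ b) : sv m x p b ≠ x := by
  have := dlt_bnd hp hb hpb; unfold sv; split_ifs <;> omega

lemma sv_ne_p (hx : x < m) (hp : p < m) (hb : b < m) (hpb : p ≠ b) (hxb : x ≠ b) :
    sv m x p b ≠ p := by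
  unfold sv dlt; split_ifs <;> omega

lemma kv_bnd (hx : x < m) (hp : p < m) (hb : b < m) (hpb : p ≠ b) (hxb : x ≠ b)
    (hxp : x ≠ p) : kv m x p b ≤ m - 3 := by
  have h1 := sv_lt hx hp hb hpb
  have h2 := sv_ne_x hx hp hb hpb
  have h3 := sv_ne_p hx hp hb hpb hxb
  unfold kv; split_ifs <;> omega

lemma mem1_w_lt (hx : x < m) (hp : p < m) (hb : b < m) (hpb : p ≠ b) :
    mem1 x (sv m x p b) < m - 1 := by
  have h1 := sv_lt hx hp hb hpb
  have h2 := sv_ne_x hx hp hb hpb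
  unfold mem1; split_ifs <;> omega

lemma tv_lt (hm : 2 ≤ m) (hx : x < m) (hp : p < m) (hb : b < m) (hpb : p ≠ b) (hxb : x ≠ b)
    (hxp : x ≠ p) : tv m x p b < m - 1 := by
  have h1 := kv_bnd hx hp hb hpb hxb hxp
  have h2 := mem1_w_lt hx hp hb hpb
  unfold tv; split_ifs <;> omega

lemma tv_ne_w (hx : x < m) (hp : p < m) (hb : b < m) (hpb : p ≠ b) :
    tv m x p b ≠ mem1 x (sv m x p b) := by
  unfold tv; split_ifs <;> omega

end facts

lemma phiv_inj {m s1 t1 s2 t2 : ℕ} (h1 : t1 < m - 1) (h2 : t2 < m - 1)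
    (e : phiv m s1 t1 = phiv m s2 t2) : s1 = s2 ∧ t1 = t2 := by
  unfold phiv at e
  rcases lt_trichotomy s1 s2 with h | h | h
  · exfalso
    have hh : (s1 + 1) * (m - 1) ≤ s2 * (m - 1) := Nat.mul_le_mul_right _ h
    have e2 : (s1 + 1) * (m - 1) = s1 * (m - 1) + (m - 1) := by ring
    omega
  · subst h; omega
  · exfalso
    have hh : (s2 + 1) * (m - 1) ≤ s1 * (m - 1) := Nat.mul_le_mul_right _ h
    have e2 : (s2 + 1) * (m - 1) = s2 * (m - 1) + (m - 1) := by ring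
    omega

lemma phiv_range {m s t : ℕ} (hs : s < m) (ht : t < m - 1) :
    m ≤ phiv m s t ∧ phiv m s t < m * m := by
  unfold phiv
  constructor
  · omega
  · have h1 : s * (m - 1) ≤ (m - 1) * (m - 1) := Nat.mul_le_mul_right _ (by omega)
    have h2 : (m - 1) * (m - 1) + (m - 1) + (m - 1) + 1 = m * m := by
      cases m with
      | zero => omega
      | succ k => simp [Nat.succ_sub_one]; ring
    omega

/-- recover `d` from `s` -/
lemma sv_inj_d {m x p1 b1 p2 b2 : ℕ} (hx : x < m)
    (hp1 : p1 < m) (hb1 : b1 < m) (h1 : p1 ≠ b1)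
    (hp2 : p2 < m) (hb2 : b2 < m) (h2 : p2 ≠ b2)
    (e : sv m x p1 b1 = sv m x p2 b2) : dlt m p1 b1 = dlt m p2 b2 := by
  have d1 := dlt_bnd hp1 hb1 h1
  have d2 := dlt_bnd hp2 hb2 h2
  unfold sv at e; split_ifs at e <;> omega

lemma forv_inj_row {m x p1 b1 p2 b2 : ℕ} (hm : 2 ≤ m) (hx : x < m)
    (hp1 : p1 < m) (hb1 : b1 < m) (h1 : p1 ≠ b1) (hxb1 : x ≠ b1) (hxp1 : x ≠ p1)
    (hp2 : p2 < m) (hb2 : b2 < m) (h2 : p2 ≠ b2) (hxb2 : x ≠ b2) (hxp2 : x ≠ p2)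
    (e : forv m x p1 b1 = forv m x p2 b2) : p1 = p2 ∧ b1 = b2 := by
  unfold forv at e
  obtain ⟨hs, ht⟩ := phiv_inj (tv_lt hm hx hp1 hb1 h1 hxb1 hxp1)
    (tv_lt hm hx hp2 hb2 h2 hxb2 hxp2) e
  have hd := sv_inj_d hx hp1 hb1 h1 hp2 hb2 h2 hs
  -- from tv equality and sv equality get kv equality
  have hk : kv m x p1 b1 = kv m x p2 b2 := by
    have w1 := mem1_w_lt hx hp1 hb1 h1
    rw [hs] at w1
    unfold tv at ht
    rw [hs] at ht
    split_ifs at ht <;> omega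
  -- from kv equality get p1 = p2
  have hsp1 := sv_ne_p hx hp1 hb1 h1 hxb1
  have hsp2 := sv_ne_p hx hp2 hb2 h2 hxb2
  have hsx := sv_ne_x hx hp1 hb1 h1
  have hsl := sv_lt hx hp1 hb1 h1
  rw [hs] at hsp1 hsx hsl
  have hp : p1 = p2 := by
    unfold kv at hk
    rw [hs] at hk
    split_ifs at hk <;> omega
  subst hp
  refine ⟨rfl, ?_⟩
  unfold dlt at hd; split_ifs at hd <;> omega

lemma forv_inj_col {m x1 x2 p b : ℕ} (hm : 2 ≤ m) (hp : p < m) (hb : b < m) (hpb : p ≠ b)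
    (hx1 : x1 < m) (hx1b : x1 ≠ b) (hx1p : x1 ≠ p)
    (hx2 : x2 < m) (hx2b : x2 ≠ b) (hx2p : x2 ≠ p)
    (e : forv m x1 p b = forv m x2 p b) : x1 = x2 := by
  unfold forv at e
  obtain ⟨hs, _⟩ := phiv_inj (tv_lt hm hx1 hp hb hpb hx1b hx1p)
    (tv_lt hm hx2 hp hb hpb hx2b hx2p) e
  have d1 := dlt_bnd hp hb hpb
  unfold sv at hs; split_ifs at hs <;> omega


section kolfacts
variable {m n x j : ℕ}

lemma mem1_lt {a c : ℕ} (ha : a < m) (hc : c < m) (hac : a ≠ c) : mem1 a c < m - 1 := by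
  unfold mem1; split_ifs <;> omega

lemma mem1_inj {a1 a2 c : ℕ} (h1 : a1 ≠ c) (h2 : a2 ≠ c) (e : mem1 a1 c = mem1 a2 c) :
    a1 = a2 := by
  unfold mem1 at e; split_ifs at e <;> omega

/-- exhaustive case description of `kol` -/
lemma kol_cases (hm : 2 ≤ m) (hn : m * m + m ≤ n + 1) (hx : x < m) (hj : j < n) :
    (j < m * m ∧ j = m * x + x ∧ kol m n x j = m * m + x) ∨
    (∃ r, j < m * m ∧ j = m * r + r ∧ r < m ∧ x ≠ r ∧
      kol m n x j = phiv m r (mem1 x r)) ∨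
    (∃ p, j < m * m ∧ j = m * p + x ∧ p < m ∧ p ≠ x ∧ kol m n x j = p) ∨
    (∃ b, j < m * m ∧ j = m * x + b ∧ b < m ∧ b ≠ x ∧
      kol m n x j = phiv m x (mem1 b x)) ∨
    (∃ p b, j < m * m ∧ j = m * p + b ∧ p < m ∧ b < m ∧ p ≠ b ∧ x ≠ p ∧ x ≠ b ∧
      kol m n x j = forv m x p b) ∨
    (m * m ≤ j ∧ kol m n x j = m * m + gv (n + 1 - m * m) x (j - m * m)) := by
  by_cases hlt : j < m * m
  · have hm0 : 0 < m := by omega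
    have hdm : j = m * (j / m) + j % m := (Nat.div_add_mod j m).symm
    have hbm : j % m < m := Nat.mod_lt _ hm0
    have hpm : j / m < m := Nat.div_lt_iff_lt_mul hm0 |>.mpr hlt
    unfold kol
    rw [if_pos hlt]
    by_cases h1 : j / m = j % m
    · by_cases h2 : x = j / m
      · left; rw [if_pos h1, if_pos h2]
        have hmx : m * (j / m) = m * x := by rw [h2]
        exact ⟨hlt, by omega, rfl⟩
      · right; left
        refine ⟨j / m, hlt, by omega, hpm, h2, ?_⟩
        rw [if_pos h1, if_neg h2]
    · by_cases h2 : x = j % m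
      · right; right; left
        refine ⟨j / m, hlt, by omega, hpm, by omega, ?_⟩
        rw [if_neg h1, if_pos h2]
      · by_cases h3 : x = j / m
        · right; right; right; left
          have hmx : m * (j / m) = m * x := by rw [h3]
          refine ⟨j % m, hlt, by omega, hbm, by omega, ?_⟩
          rw [if_neg h1, if_neg h2, if_pos h3]
          rw [← h3]
        · right; right; right; right; left
          refine ⟨j / m, j % m, hlt, by omega, hpm, hbm, h1, h3, h2, ?_⟩
          rw [if_neg h1, if_neg h2, if_neg h3]
  · right; right; right; right; right
    refine ⟨by omega, ?_⟩
    unfold kol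
    rw [if_neg hlt]

lemma gv_lt (hm : 2 ≤ m) (hn : m * m + m ≤ n + 1) (hx : x < m)
    (hjj : j < n - m * m) : gv (n + 1 - m * m) x j < n + 1 - m * m := by
  have hmm : m ≤ m * m := Nat.le_mul_of_pos_left m (by omega)
  unfold gv; split_ifs <;> omega

lemma gv_inj_row (hm : 2 ≤ m) (hn : m * m + m ≤ n + 1) (hx : x < m)
    {j1 j2 : ℕ} (h1 : j1 < n - m * m) (h2 : j2 < n - m * m)
    (e : gv (n + 1 - m * m) x j1 = gv (n + 1 - m * m) x j2) : j1 = j2 := by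
  have hmm : m ≤ m * m := Nat.le_mul_of_pos_left m (by omega)
  unfold gv at e; split_ifs at e <;> omega

lemma gv_inj_col (hm : 2 ≤ m) (hn : m * m + m ≤ n + 1) {x1 x2 : ℕ}
    (hx1 : x1 < m) (hx2 : x2 < m) (hjj : j < n - m * m)
    (e : gv (n + 1 - m * m) x1 j = gv (n + 1 - m * m) x2 j) : x1 = x2 := by
  have hmm : m ≤ m * m := Nat.le_mul_of_pos_left m (by omega)
  unfold gv at e; split_ifs at e <;> omega

lemma kol_lt (hm : 2 ≤ m) (hn : m * m + m ≤ n + 1) (hx : x < m) (hj : j < n) :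
    kol m n x j < n + 1 := by
  have hmm : m ≤ m * m := Nat.le_mul_of_pos_left m (by omega)
  rcases kol_cases hm hn hx hj with ⟨_, _, hv⟩ | ⟨r, _, _, hr, hxr, hv⟩ |
    ⟨p, _, _, hp, _, hv⟩ | ⟨b, _, _, hb, hbx, hv⟩ | ⟨p, b, _, _, hp, hb, hpb, hxp, hxb, hv⟩ |
    ⟨hge, hv⟩
  · omega
  · have := phiv_range (m := m) hr (mem1_lt hx hr hxr); omega
  · omega
  · have := phiv_range (m := m) hx (mem1_lt hb hx hbx); omega
  · rw [hv]
    unfold forv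
    have := phiv_range (m := m) (sv_lt hx hp hb hpb) (tv_lt hm hx hp hb hpb hxb hxp)
    omega
  · have := gv_lt hm hn hx (j := j - m * m) (by omega); omega

end kolfacts

section kolmain
variable {m n : ℕ}

lemma decomp_unique {m p1 b1 p2 b2 : ℕ} (hm : 0 < m) (hb1 : b1 < m) (hb2 : b2 < m)
    (e : m * p1 + b1 = m * p2 + b2) : p1 = p2 ∧ b1 = b2 := by
  have e1 : (m * p1 + b1) / m = p1 := by
    rw [Nat.mul_add_div hm, Nat.div_eq_of_lt hb1]
    omega
  have e2 : (m * p2 + b2) / m = p2 := by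
    rw [Nat.mul_add_div hm, Nat.div_eq_of_lt hb2]
    omega
  have e3 : (m * p1 + b1) % m = b1 := by
    rw [Nat.mul_add_mod, Nat.mod_eq_of_lt hb1]
  have e4 : (m * p2 + b2) % m = b2 := by
    rw [Nat.mul_add_mod, Nat.mod_eq_of_lt hb2]
  constructor
  · rw [← e1, ← e2, e]
  · rw [← e3, ← e4, e]

lemma gv_ne_x (hm : 2 ≤ m) (hn : m * m + m ≤ n + 1) {x jj : ℕ} (hx : x < m)
    (hjj : jj < n - m * m) : gv (n + 1 - m * m) x jj ≠ x := by
  have hmm : m ≤ m * m := Nat.le_mul_of_pos_left m (by omega)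
  unfold gv; split_ifs <;> omega

lemma kol_ne_x (hm : 2 ≤ m) (hn : m * m + m ≤ n + 1) {x j : ℕ} (hx : x < m) (hj : j < n) :
    kol m n x j ≠ x := by
  have hmm : m ≤ m * m := Nat.le_mul_of_pos_left m (by omega)
  rcases kol_cases hm hn hx hj with ⟨_, _, hv⟩ | ⟨r, _, _, hr, hxr, hv⟩ |
    ⟨p, _, _, hp, hpx, hv⟩ | ⟨b, _, _, hb, hbx, hv⟩ | ⟨p, b, _, _, hp, hb, hpb, hxp, hxb, hv⟩ |
    ⟨hge, hv⟩
  · omega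
  · have := phiv_range (m := m) hr (mem1_lt hx hr hxr); omega
  · omega
  · have := phiv_range (m := m) hx (mem1_lt hb hx hbx); omega
  · rw [hv]; unfold forv
    have := phiv_range (m := m) (sv_lt hx hp hb hpb) (tv_lt hm hx hp hb hpb hxb hxp)
    omega
  · have := gv_ne_x hm hn hx (jj := j - m * m) (by omega); omega

lemma kol_row_inj (hm : 2 ≤ m) (hn : m * m + m ≤ n + 1) {x j1 j2 : ℕ} (hx : x < m)
    (hj1 : j1 < n) (hj2 : j2 < n) (e : kol m n x j1 = kol m n x j2) : j1 = j2 := by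
  have hmm : m ≤ m * m := Nat.le_mul_of_pos_left m (by omega)
  rcases kol_cases hm hn hx hj1 with ⟨hl1, hd1, hv1⟩ | ⟨r1, hl1, hd1, hr1, hxr1, hv1⟩ |
    ⟨p1, hl1, hd1, hp1, hpx1, hv1⟩ | ⟨b1, hl1, hd1, hb1, hbx1, hv1⟩ |
    ⟨p1, b1, hl1, hd1, hp1, hb1, hpb1, hxp1, hxb1, hv1⟩ | ⟨hge1, hv1⟩ <;>
  rcases kol_cases hm hn hx hj2 with ⟨hl2, hd2, hv2⟩ | ⟨r2, hl2, hd2, hr2, hxr2, hv2⟩ |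
    ⟨p2, hl2, hd2, hp2, hpx2, hv2⟩ | ⟨b2, hl2, hd2, hb2, hbx2, hv2⟩ |
    ⟨p2, b2, hl2, hd2, hp2, hb2, hpb2, hxp2, hxb2, hv2⟩ | ⟨hge2, hv2⟩
  -- A vs *
  · omega
  · exfalso; have := phiv_range (m := m) hr2 (mem1_lt hx hr2 hxr2); omega
  · omega
  · exfalso; have := phiv_range (m := m) hx (mem1_lt hb2 hx hbx2); omega
  · exfalso; rw [hv1, hv2] at e; unfold forv at e
    have := phiv_range (m := m) (sv_lt hx hp2 hb2 hpb2) (tv_lt hm hx hp2 hb2 hpb2 hxb2 hxp2)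
    omega
  · exfalso; have := gv_ne_x hm hn hx (jj := j2 - m * m) (by omega); omega
  -- B vs *
  · exfalso; have := phiv_range (m := m) hr1 (mem1_lt hx hr1 hxr1); omega
  · rw [hv1, hv2] at e
    obtain ⟨hs, ht⟩ := phiv_inj (mem1_lt hx hr1 hxr1) (mem1_lt hx hr2 hxr2) e
    subst hs; omega
  · exfalso; have := phiv_range (m := m) hr1 (mem1_lt hx hr1 hxr1); omega
  · exfalso; rw [hv1, hv2] at e
    obtain ⟨hs, ht⟩ := phiv_inj (mem1_lt hx hr1 hxr1) (mem1_lt hb2 hx hbx2) e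
    omega
  · exfalso; rw [hv1, hv2] at e; unfold forv at e
    obtain ⟨hs, ht⟩ := phiv_inj (mem1_lt hx hr1 hxr1)
      (tv_lt hm hx hp2 hb2 hpb2 hxb2 hxp2) e
    have hw := tv_ne_w (m := m) (x := x) (p := p2) (b := b2) hx hp2 hb2 hpb2
    rw [← hs] at hw; exact hw ht.symm
  · exfalso; have := phiv_range (m := m) hr1 (mem1_lt hx hr1 hxr1); omega
  -- C vs *
  · omega
  · exfalso; have := phiv_range (m := m) hr2 (mem1_lt hx hr2 hxr2); omega
  · rw [hv1, hv2] at e; subst e; omega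
  · exfalso; have := phiv_range (m := m) hx (mem1_lt hb2 hx hbx2); omega
  · exfalso; rw [hv1, hv2] at e; unfold forv at e
    have := phiv_range (m := m) (sv_lt hx hp2 hb2 hpb2) (tv_lt hm hx hp2 hb2 hpb2 hxb2 hxp2)
    omega
  · omega
  -- D vs *
  · exfalso; have := phiv_range (m := m) hx (mem1_lt hb1 hx hbx1); omega
  · exfalso; rw [hv1, hv2] at e
    obtain ⟨hs, ht⟩ := phiv_inj (mem1_lt hb1 hx hbx1) (mem1_lt hx hr2 hxr2) e
    omega
  · exfalso; have := phiv_range (m := m) hx (mem1_lt hb1 hx hbx1); omega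
  · rw [hv1, hv2] at e
    obtain ⟨hs, ht⟩ := phiv_inj (mem1_lt hb1 hx hbx1) (mem1_lt hb2 hx hbx2) e
    have := mem1_inj hbx1 hbx2 ht
    omega
  · exfalso; rw [hv1, hv2] at e; unfold forv at e
    obtain ⟨hs, ht⟩ := phiv_inj (mem1_lt hb1 hx hbx1)
      (tv_lt hm hx hp2 hb2 hpb2 hxb2 hxp2) e
    exact sv_ne_x hx hp2 hb2 hpb2 hs.symm
  · exfalso; have := phiv_range (m := m) hx (mem1_lt hb1 hx hbx1); omega
  -- E vs *
  · exfalso; rw [hv1, hv2] at e; unfold forv at e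
    have := phiv_range (m := m) (sv_lt hx hp1 hb1 hpb1) (tv_lt hm hx hp1 hb1 hpb1 hxb1 hxp1)
    omega
  · exfalso; rw [hv1, hv2] at e; unfold forv at e
    obtain ⟨hs, ht⟩ := phiv_inj (tv_lt hm hx hp1 hb1 hpb1 hxb1 hxp1)
      (mem1_lt hx hr2 hxr2) e
    have hw := tv_ne_w (m := m) (x := x) (p := p1) (b := b1) hx hp1 hb1 hpb1
    rw [hs] at hw; exact hw ht
  · exfalso; rw [hv1, hv2] at e; unfold forv at e
    have := phiv_range (m := m) (sv_lt hx hp1 hb1 hpb1) (tv_lt hm hx hp1 hb1 hpb1 hxb1 hxp1)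
    omega
  · exfalso; rw [hv1, hv2] at e; unfold forv at e
    obtain ⟨hs, ht⟩ := phiv_inj (tv_lt hm hx hp1 hb1 hpb1 hxb1 hxp1)
      (mem1_lt hb2 hx hbx2) e
    exact sv_ne_x hx hp1 hb1 hpb1 hs
  · rw [hv1, hv2] at e
    obtain ⟨hp, hb⟩ := forv_inj_row hm hx hp1 hb1 hpb1 hxb1 hxp1 hp2 hb2 hpb2 hxb2 hxp2 e
    subst hp; subst hb; omega
  · exfalso; rw [hv1, hv2] at e; unfold forv at e
    have := phiv_range (m := m) (sv_lt hx hp1 hb1 hpb1) (tv_lt hm hx hp1 hb1 hpb1 hxb1 hxp1)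
    omega
  -- F vs *
  · exfalso; have := gv_ne_x hm hn hx (jj := j1 - m * m) (by omega); omega
  · exfalso; have := phiv_range (m := m) hr2 (mem1_lt hx hr2 hxr2); omega
  · omega
  · exfalso; have := phiv_range (m := m) hx (mem1_lt hb2 hx hbx2); omega
  · exfalso; rw [hv1, hv2] at e; unfold forv at e
    have := phiv_range (m := m) (sv_lt hx hp2 hb2 hpb2) (tv_lt hm hx hp2 hb2 hpb2 hxb2 hxp2)
    omega
  · rw [hv1, hv2] at e
    have := gv_inj_row hm hn hx (j1 := j1 - m * m) (j2 := j2 - m * m)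
      (by omega) (by omega) (by omega)
    omega

end kolmain

section kolcol
variable {m n : ℕ}

lemma kol_col_inj (hm : 2 ≤ m) (hn : m * m + m ≤ n + 1) {x1 x2 j : ℕ}
    (hx1 : x1 < m) (hx2 : x2 < m) (hj : j < n)
    (e : kol m n x1 j = kol m n x2 j) : x1 = x2 := by
  have hmm : m ≤ m * m := Nat.le_mul_of_pos_left m (by omega)
  have hm0 : (0:ℕ) < m := by omega
  rcases kol_cases hm hn hx1 hj with ⟨hl1, hd1, hv1⟩ | ⟨r1, hl1, hd1, hr1, hxr1, hv1⟩ |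
    ⟨p1, hl1, hd1, hp1, hpx1, hv1⟩ | ⟨b1, hl1, hd1, hb1, hbx1, hv1⟩ |
    ⟨p1, b1, hl1, hd1, hp1, hb1, hpb1, hxp1, hxb1, hv1⟩ | ⟨hge1, hv1⟩ <;>
  rcases kol_cases hm hn hx2 hj with ⟨hl2, hd2, hv2⟩ | ⟨r2, hl2, hd2, hr2, hxr2, hv2⟩ |
    ⟨p2, hl2, hd2, hp2, hpx2, hv2⟩ | ⟨b2, hl2, hd2, hb2, hbx2, hv2⟩ |
    ⟨p2, b2, hl2, hd2, hp2, hb2, hpb2, hxp2, hxb2, hv2⟩ | ⟨hge2, hv2⟩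
  -- A vs A..F
  · obtain ⟨hp, hb⟩ := decomp_unique (p1 := x1) (p2 := x2) hm0 hx1 hx2 (by omega); omega
  · exfalso; have := phiv_range (m := m) hr2 (mem1_lt hx2 hr2 hxr2); omega
  · obtain ⟨hp, hb⟩ := decomp_unique (p1 := x1) (p2 := p2) hm0 hx1 hx2 (by omega); omega
  · obtain ⟨hp, hb⟩ := decomp_unique (p1 := x1) (p2 := x2) hm0 hx1 hb2 (by omega); omega
  · exfalso; obtain ⟨hp, hb⟩ := decomp_unique (p1 := x1) (p2 := p2) hm0 hx1 hb2 (by omega)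
    omega
  · omega
  -- B vs *
  · exfalso; have := phiv_range (m := m) hr1 (mem1_lt hx1 hr1 hxr1); omega
  · obtain ⟨hp, hb⟩ := decomp_unique (p1 := r1) (p2 := r2) hm0 hr1 hr2 (by omega)
    subst hp
    rw [hv1, hv2] at e
    obtain ⟨hs, ht⟩ := phiv_inj (mem1_lt hx1 hr1 hxr1) (mem1_lt hx2 hr1 hxr2) e
    exact mem1_inj hxr1 hxr2 ht
  · exfalso; obtain ⟨hp, hb⟩ := decomp_unique (p1 := r1) (p2 := p2) hm0 hr1 hx2 (by omega)
    omega
  · exfalso; obtain ⟨hp, hb⟩ := decomp_unique (p1 := r1) (p2 := x2) hm0 hr1 hb2 (by omega)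
    omega
  · exfalso; obtain ⟨hp, hb⟩ := decomp_unique (p1 := r1) (p2 := p2) hm0 hr1 hb2 (by omega)
    omega
  · omega
  -- C vs *
  · obtain ⟨hp, hb⟩ := decomp_unique (p1 := p1) (p2 := x2) hm0 hx1 hx2 (by omega); omega
  · exfalso; obtain ⟨hp, hb⟩ := decomp_unique (p1 := p1) (p2 := r2) hm0 hx1 hr2 (by omega)
    omega
  · obtain ⟨hp, hb⟩ := decomp_unique (p1 := p1) (p2 := p2) hm0 hx1 hx2 (by omega); omega
  · exfalso
    obtain ⟨hp, hb⟩ := decomp_unique (p1 := p1) (p2 := x2) hm0 hx1 hb2 (by omega)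
    rw [hv1, hv2] at e
    have := phiv_range (m := m) hx2 (mem1_lt hb2 hx2 hbx2); omega
  · exfalso
    obtain ⟨hp, hb⟩ := decomp_unique (p1 := p1) (p2 := p2) hm0 hx1 hb2 (by omega)
    rw [hv1, hv2] at e; unfold forv at e
    have := phiv_range (m := m) (sv_lt hx2 hp2 hb2 hpb2)
      (tv_lt hm hx2 hp2 hb2 hpb2 hxb2 hxp2)
    omega
  · omega
  -- D vs *
  · obtain ⟨hp, hb⟩ := decomp_unique (p1 := x1) (p2 := x2) hm0 hb1 hx2 (by omega); omega
  · exfalso; obtain ⟨hp, hb⟩ := decomp_unique (p1 := x1) (p2 := r2) hm0 hb1 hr2 (by omega)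
    omega
  · exfalso
    obtain ⟨hp, hb⟩ := decomp_unique (p1 := x1) (p2 := p2) hm0 hb1 hx2 (by omega)
    rw [hv1, hv2] at e
    have := phiv_range (m := m) hx1 (mem1_lt hb1 hx1 hbx1); omega
  · obtain ⟨hp, hb⟩ := decomp_unique (p1 := x1) (p2 := x2) hm0 hb1 hb2 (by omega); omega
  · exfalso
    obtain ⟨hp, hb⟩ := decomp_unique (p1 := x1) (p2 := p2) hm0 hb1 hb2 (by omega)
    rw [hv1, hv2] at e; unfold forv at e
    obtain ⟨hs, ht⟩ := phiv_inj (mem1_lt hb1 hx1 hbx1)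
      (tv_lt hm hx2 hp2 hb2 hpb2 hxb2 hxp2) e
    exact sv_ne_p hx2 hp2 hb2 hpb2 hxb2 (by omega)
  · omega
  -- E vs *
  · exfalso; obtain ⟨hp, hb⟩ := decomp_unique (p1 := p1) (p2 := x2) hm0 hb1 hx2 (by omega)
    omega
  · exfalso; obtain ⟨hp, hb⟩ := decomp_unique (p1 := p1) (p2 := r2) hm0 hb1 hr2 (by omega)
    omega
  · exfalso
    obtain ⟨hp, hb⟩ := decomp_unique (p1 := p1) (p2 := p2) hm0 hb1 hx2 (by omega)
    rw [hv1, hv2] at e; unfold forv at e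
    have := phiv_range (m := m) (sv_lt hx1 hp1 hb1 hpb1)
      (tv_lt hm hx1 hp1 hb1 hpb1 hxb1 hxp1)
    omega
  · exfalso
    obtain ⟨hp, hb⟩ := decomp_unique (p1 := p1) (p2 := x2) hm0 hb1 hb2 (by omega)
    subst hp; subst hb
    rw [hv1, hv2] at e; unfold forv at e
    obtain ⟨hs, ht⟩ := phiv_inj (tv_lt hm hx1 hp1 hb1 hpb1 hxb1 hxp1)
      (mem1_lt hb1 hp1 hbx2) e
    exact sv_ne_p hx1 hp1 hb1 hpb1 hxb1 hs
  · obtain ⟨hp, hb⟩ := decomp_unique (p1 := p1) (p2 := p2) hm0 hb1 hb2 (by omega)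
    subst hp; subst hb
    rw [hv1, hv2] at e
    exact forv_inj_col hm hp1 hb1 hpb1 hx1 hxb1 hxp1 hx2 hxb2 hxp2 e
  · omega
  -- F vs *
  · omega
  · omega
  · omega
  · omega
  · omega
  · rw [hv1, hv2] at e
    exact gv_inj_col (j := j - m * m) hm hn hx1 hx2 (by omega) (by omega)

end kolcol

section kolchar
variable {m n : ℕ}

lemma mul_bound_aux {m p x : ℕ} (hp : p < m) (hx : x < m) : m * p + x < m * m := by
  have h1 : m * (p + 1) ≤ m * m := Nat.mul_le_mul_left m (by omega)
  have h2 : m * (p + 1) = m * p + m := by ring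
  omega

/-- if the color is low, the cell is a low cell -/
lemma kol_low_dest (hm : 2 ≤ m) (hn : m * m + m ≤ n + 1) {x j : ℕ} (hx : x < m) (hj : j < n)
    (hv : kol m n x j < m) :
    j < m * m ∧ j = m * (kol m n x j) + x ∧ kol m n x j ≠ x ∧ kol m n x j < m := by
  have hmm : m ≤ m * m := Nat.le_mul_of_pos_left m (by omega)
  rcases kol_cases hm hn hx hj with ⟨hl1, hd1, hv1⟩ | ⟨r1, hl1, hd1, hr1, hxr1, hv1⟩ |
    ⟨p1, hl1, hd1, hp1, hpx1, hv1⟩ | ⟨b1, hl1, hd1, hb1, hbx1, hv1⟩ |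
    ⟨p1, b1, hl1, hd1, hp1, hb1, hpb1, hxp1, hxb1, hv1⟩ | ⟨hge1, hv1⟩
  · omega
  · exfalso; have := phiv_range (m := m) hr1 (mem1_lt hx hr1 hxr1); omega
  · refine ⟨hl1, ?_, by omega, hv⟩; rw [hv1]; exact hd1
  · exfalso; have := phiv_range (m := m) hx (mem1_lt hb1 hx hbx1); omega
  · exfalso; rw [hv1] at hv; unfold forv at hv
    have := phiv_range (m := m) (sv_lt hx hp1 hb1 hpb1) (tv_lt hm hx hp1 hb1 hpb1 hxb1 hxp1)
    omega
  · omega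

lemma kol_low_val (hm : 2 ≤ m) (hn : m * m + m ≤ n + 1) {x j p : ℕ} (hx : x < m) (hj : j < n)
    (hp : p < m) (hpx : p ≠ x) (hd : j = m * p + x) : kol m n x j = p := by
  have hmm : m ≤ m * m := Nat.le_mul_of_pos_left m (by omega)
  have hm0 : (0:ℕ) < m := by omega
  have hjlt : j < m * m := by have := mul_bound_aux (m := m) hp hx; omega
  rcases kol_cases hm hn hx hj with ⟨hl1, hd1, hv1⟩ | ⟨r1, hl1, hd1, hr1, hxr1, hv1⟩ |
    ⟨p1, hl1, hd1, hp1, hpx1, hv1⟩ | ⟨b1, hl1, hd1, hb1, hbx1, hv1⟩ |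
    ⟨p1, b1, hl1, hd1, hp1, hb1, hpb1, hxp1, hxb1, hv1⟩ | ⟨hge1, hv1⟩
  · exfalso; obtain ⟨h1, h2⟩ := decomp_unique (p1 := p) (p2 := x) hm0 hx hx (by omega); omega
  · exfalso; obtain ⟨h1, h2⟩ := decomp_unique (p1 := p) (p2 := r1) hm0 hx hr1 (by omega); omega
  · obtain ⟨h1, h2⟩ := decomp_unique (p1 := p) (p2 := p1) hm0 hx hx (by omega); omega
  · exfalso; obtain ⟨h1, h2⟩ := decomp_unique (p1 := p) (p2 := x) hm0 hx hb1 (by omega); omega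
  · exfalso; obtain ⟨h1, h2⟩ := decomp_unique (p1 := p) (p2 := p1) hm0 hx hb1 (by omega); omega
  · omega

lemma kol_cov_val (hm : 2 ≤ m) (hn : m * m + m ≤ n + 1) {x j b : ℕ} (hx : x < m) (hj : j < n)
    (hb : b < m) (hbx : b ≠ x) (hd : j = m * x + b) :
    kol m n x j = phiv m x (mem1 b x) := by
  have hmm : m ≤ m * m := Nat.le_mul_of_pos_left m (by omega)
  have hm0 : (0:ℕ) < m := by omega
  have hjlt : j < m * m := by have := mul_bound_aux (m := m) hx hb; omega
  rcases kol_cases hm hn hx hj with ⟨hl1, hd1, hv1⟩ | ⟨r1, hl1, hd1, hr1, hxr1, hv1⟩ |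
    ⟨p1, hl1, hd1, hp1, hpx1, hv1⟩ | ⟨b1, hl1, hd1, hb1, hbx1, hv1⟩ |
    ⟨p1, b1, hl1, hd1, hp1, hb1, hpb1, hxp1, hxb1, hv1⟩ | ⟨hge1, hv1⟩
  · exfalso; obtain ⟨h1, h2⟩ := decomp_unique (p1 := x) (p2 := x) hm0 hb hx (by omega); omega
  · exfalso; obtain ⟨h1, h2⟩ := decomp_unique (p1 := x) (p2 := r1) hm0 hb hr1 (by omega); omega
  · exfalso; obtain ⟨h1, h2⟩ := decomp_unique (p1 := x) (p2 := p1) hm0 hb hx (by omega); omega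
  · obtain ⟨h1, h2⟩ := decomp_unique (p1 := x) (p2 := x) hm0 hb hb1 (by omega)
    rw [hv1, h2]
  · exfalso; obtain ⟨h1, h2⟩ := decomp_unique (p1 := x) (p2 := p1) hm0 hb hb1 (by omega); omega
  · omega

lemma kol_cov_inj (hm : 2 ≤ m) (hn : m * m + m ≤ n + 1) {x1 x2 j1 j2 b1 b2 : ℕ}
    (hx1 : x1 < m) (hx2 : x2 < m) (hj1 : j1 < n) (hj2 : j2 < n)
    (hb1 : b1 < m) (hbx1 : b1 ≠ x1) (hd1 : j1 = m * x1 + b1)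
    (hb2 : b2 < m) (hbx2 : b2 ≠ x2) (hd2 : j2 = m * x2 + b2)
    (e : kol m n x1 j1 = kol m n x2 j2) : x1 = x2 ∧ j1 = j2 := by
  rw [kol_cov_val hm hn hx1 hj1 hb1 hbx1 hd1, kol_cov_val hm hn hx2 hj2 hb2 hbx2 hd2] at e
  obtain ⟨hs, ht⟩ := phiv_inj (mem1_lt hb1 hx1 hbx1) (mem1_lt hb2 hx2 hbx2) e
  subst hs
  have hbb := mem1_inj hbx1 hbx2 ht
  subst hbb
  exact ⟨rfl, by omega⟩

end kolchar

section graphlayer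
open SimpleGraph
variable {m n : ℕ}

abbrev KG (m n : ℕ) : SimpleGraph (Fin m × Fin n) :=
  (⊤ : SimpleGraph (Fin m)) □ (⊤ : SimpleGraph (Fin n))

lemma kg_adj {u v : Fin m × Fin n} :
    (KG m n).Adj u v ↔ (u.1 = v.1 ∧ u.2 ≠ v.2) ∨ (u.2 = v.2 ∧ u.1 ≠ v.1) := by
  rw [SimpleGraph.boxProd_adj]
  simp only [top_adj]
  tauto

lemma kg_dist_one {u v : Fin m × Fin n} (h : (KG m n).Adj u v) : (KG m n).dist u v = 1 :=
  SimpleGraph.dist_eq_one_iff_adj.mpr h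

lemma kg_walk2 {u v : Fin m × Fin n} (h1 : u.1 ≠ v.1) (h2 : u.2 ≠ v.2) :
    ∃ w : (KG m n).Walk u v, w.length = 2 := by
  have ha1 : (KG m n).Adj u (u.1, v.2) := by
    rw [kg_adj]; left; exact ⟨rfl, by simpa using h2⟩
  have ha2 : (KG m n).Adj (u.1, v.2) v := by
    rw [kg_adj]; right; exact ⟨rfl, by simpa using h1⟩
  exact ⟨SimpleGraph.Walk.cons ha1 (SimpleGraph.Walk.cons ha2 SimpleGraph.Walk.nil), rfl⟩

lemma kg_reachable (u v : Fin m × Fin n) : (KG m n).Reachable u v := by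
  by_cases h : u = v
  · subst h; exact SimpleGraph.Reachable.refl u
  · by_cases ha : (KG m n).Adj u v
    · exact ha.reachable
    · have h1 : u.1 ≠ v.1 := by
        intro he
        have h2 : u.2 ≠ v.2 := fun he2 => h (Prod.ext he he2)
        exact ha (kg_adj.mpr (Or.inl ⟨he, h2⟩))
      have h2 : u.2 ≠ v.2 := by
        intro he
        exact ha (kg_adj.mpr (Or.inr ⟨he, h1⟩))
      obtain ⟨w, _⟩ := kg_walk2 h1 h2
      exact ⟨w⟩

lemma kg_dist_zero_iff {u v : Fin m × Fin n} : (KG m n).dist u v = 0 ↔ u = v :=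
  (kg_reachable u v).dist_eq_zero_iff

lemma kg_dist_two {u v : Fin m × Fin n} (hne : u ≠ v) (hna : ¬ (KG m n).Adj u v) :
    (KG m n).dist u v = 2 := by
  have h1 : u.1 ≠ v.1 := by
    intro he
    have h2 : u.2 ≠ v.2 := fun he2 => hne (Prod.ext he he2)
    exact hna (kg_adj.mpr (Or.inl ⟨he, h2⟩))
  have h2 : u.2 ≠ v.2 := by
    intro he
    exact hna (kg_adj.mpr (Or.inr ⟨he, h1⟩))
  obtain ⟨w, hw⟩ := kg_walk2 h1 h2
  have hle : (KG m n).dist u v ≤ 2 := hw ▸ SimpleGraph.dist_le w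
  have h0 : (KG m n).dist u v ≠ 0 := fun h => hne (kg_dist_zero_iff.mp h)
  have hone : (KG m n).dist u v ≠ 1 := fun h =>
    hna (SimpleGraph.dist_eq_one_iff_adj.mp h)
  omega

lemma kg_setDist_zero {v : Fin m × Fin n} {S : Set (Fin m × Fin n)} (h : v ∈ S) :
    setDist (KG m n) v S = 0 := by
  unfold setDist
  exact Nat.sInf_eq_zero.mpr (Or.inl ⟨v, h, by simp⟩)

lemma kg_setDist_one {v : Fin m × Fin n} {S : Set (Fin m × Fin n)} (hv : v ∉ S)
    (hex : ∃ u ∈ S, (KG m n).Adj v u) : setDist (KG m n) v S = 1 := by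
  obtain ⟨u, hu, hadj⟩ := hex
  unfold setDist
  apply le_antisymm
  · exact Nat.sInf_le ⟨u, hu, kg_dist_one hadj⟩
  · rcases Nat.eq_zero_or_pos (sInf ((KG m n).dist v '' S)) with h0 | h1
    · exfalso
      rcases Nat.sInf_eq_zero.mp h0 with hmem | hemp
      · obtain ⟨w, hw, hdw⟩ := hmem
        rw [← kg_dist_zero_iff.mp hdw] at hw
        exact hv hw
      · have : ((KG m n).dist v u) ∈ (KG m n).dist v '' S := ⟨u, hu, rfl⟩
        rw [hemp] at this
        exact this
    · exact h1

lemma kg_setDist_two {v : Fin m × Fin n} {S : Set (Fin m × Fin n)} (hv : v ∉ S)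
    (hne : S.Nonempty) (hna : ∀ u ∈ S, ¬ (KG m n).Adj v u) : setDist (KG m n) v S = 2 := by
  obtain ⟨u, hu⟩ := hne
  have hval : ∀ w ∈ S, (KG m n).dist v w = 2 := by
    intro w hw
    exact kg_dist_two (fun he => hv (he ▸ hw)) (hna w hw)
  unfold setDist
  apply le_antisymm
  · exact Nat.sInf_le ⟨u, hu, hval u hu⟩
  · have hne2 : ((KG m n).dist v '' S).Nonempty := ⟨_, u, hu, rfl⟩
    apply le_csInf hne2
    rintro b ⟨w, hw, rfl⟩
    rw [hval w hw]

end graphlayer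

section upper
open SimpleGraph
variable {m n : ℕ}

/-- the coloring, bundled into `Fin (n+1)` -/
def CC (m n : ℕ) (v : Fin m × Fin n) : Fin (n + 1) :=
  ⟨min (kol m n v.1.val v.2.val) n, by omega⟩

lemma CC_val (hm : 2 ≤ m) (hn : m * m + m ≤ n + 1) (v : Fin m × Fin n) :
    (CC m n v).val = kol m n v.1.val v.2.val := by
  have := kol_lt hm hn v.1.isLt v.2.isLt
  simp [CC]; omega

lemma row_surj (hm : 2 ≤ m) (hn : m * m + m ≤ n + 1) {x c : ℕ} (hx : x < m)
    (hc : c < n + 1) (hcx : c ≠ x) : ∃ j, j < n ∧ kol m n x j = c := by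
  have hmn1 : m ≤ n + 1 := by nlinarith
  have hn1 : 1 ≤ n := by nlinarith
  set f : Fin n → Fin (n + 1) := fun j => ⟨kol m n x j.val, kol_lt hm hn hx j.isLt⟩ with hf
  have hinj : Function.Injective f := by
    intro j1 j2 he
    have : kol m n x j1.val = kol m n x j2.val := congrArg Fin.val he
    exact Fin.ext (kol_row_inj hm hn hx j1.isLt j2.isLt this)
  have hsub : Finset.univ.image f ⊆ Finset.univ.erase ⟨x, by omega⟩ := by
    intro y hy
    simp only [Finset.mem_image] at hy
    obtain ⟨j, _, rfl⟩ := hy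
    refine Finset.mem_erase.mpr ⟨?_, Finset.mem_univ _⟩
    intro he
    have := congrArg Fin.val he
    simp only [hf] at this
    exact kol_ne_x hm hn hx j.isLt this
  have hcard : (Finset.univ.erase (⟨x, by omega⟩ : Fin (n+1))).card ≤
      (Finset.univ.image f).card := by
    rw [Finset.card_image_of_injective _ hinj, Finset.card_erase_of_mem (Finset.mem_univ _)]
    simp
  have heq := Finset.eq_of_subset_of_card_le hsub hcard
  have hmem : (⟨c, hc⟩ : Fin (n+1)) ∈ Finset.univ.erase (⟨x, by omega⟩ : Fin (n+1)) := by
    refine Finset.mem_erase.mpr ⟨?_, Finset.mem_univ _⟩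
    intro he
    exact hcx (congrArg Fin.val he)
  rw [← heq] at hmem
  simp only [Finset.mem_image] at hmem
  obtain ⟨j, _, hj⟩ := hmem
  exact ⟨j.val, j.isLt, congrArg Fin.val hj⟩

/-- covered cell predicate -/
def Cov (m : ℕ) (v : Fin m × Fin n) : Prop :=
  ∃ b, b < m ∧ b ≠ v.1.val ∧ v.2.val = m * v.1.val + b

lemma code_val (hm : 2 ≤ m) (hn : m * m + m ≤ n + 1) (v : Fin m × Fin n) (i : Fin (n + 1)) :
    colorCode (KG m n) (CC m n) v i =
      if i = CC m n v then 0
      else if i.val = v.1.val ∧ ¬ Cov m v then 2 else 1 := by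
  have hmm : m ≤ m * m := Nat.le_mul_of_pos_left m (by omega)
  have hmsq : m * m ≤ n := by omega
  unfold colorCode
  by_cases h0 : i = CC m n v
  · rw [if_pos h0]
    exact kg_setDist_zero (by simp [h0])
  · rw [if_neg h0]
    have hvnot : v ∉ CC m n ⁻¹' {i} := by
      simp only [Set.mem_preimage, Set.mem_singleton_iff]
      exact fun he => h0 he.symm
    by_cases h2 : i.val = v.1.val ∧ ¬ Cov m v
    · rw [if_pos h2]
      obtain ⟨hix, hnc⟩ := h2
      -- class of i is nonempty and no member is adjacent to v
      apply kg_setDist_two hvnot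
      · -- nonempty
        set b : ℕ := if v.1.val = 0 then 1 else 0 with hb
        have hbm : b < m := by simp [hb]; split_ifs <;> omega
        have hbx : v.1.val ≠ b := by simp [hb]; split_ifs <;> omega
        have hjlt : m * v.1.val + b < n := by
          have := mul_bound_aux (m := m) (p := v.1.val) (x := b) v.1.isLt hbm
          omega
        refine ⟨(⟨b, hbm⟩, ⟨m * v.1.val + b, hjlt⟩), ?_⟩
        simp only [Set.mem_preimage, Set.mem_singleton_iff]
        apply Fin.ext
        rw [CC_val hm hn]
        simp only
        rw [kol_low_val hm hn hbm hjlt v.1.isLt (by omega) rfl]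
        omega
      · -- no adjacent member
        rintro u hu hadj
        simp only [Set.mem_preimage, Set.mem_singleton_iff] at hu
        have huv : kol m n u.1.val u.2.val = v.1.val := by
          rw [← CC_val hm hn u, hu, hix]
        have hlow : kol m n u.1.val u.2.val < m := by rw [huv]; exact v.1.isLt
        obtain ⟨hu2lt, hu2eq, hune, _⟩ := kol_low_dest hm hn u.1.isLt u.2.isLt hlow
        rw [huv] at hu2eq hune
        rcases kg_adj.mp hadj with ⟨he1, _⟩ | ⟨he2, hne1⟩
        · -- same row : impossible since u's row ≠ v.1
          have : u.1.val = v.1.val := (congrArg Fin.val he1).symm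
          omega
        · -- same column: then v would be covered
          apply hnc
          refine ⟨u.1.val, u.1.isLt, by omega, ?_⟩
          have : u.2.val = v.2.val := (congrArg Fin.val he2).symm
          omega
    · rw [if_neg h2]
      push_neg at h2
      -- distance is 1
      apply kg_setDist_one hvnot
      by_cases hix : i.val = v.1.val
      · -- v is covered; the low cell in the same column works
        obtain ⟨b, hbm, hbx, hjd⟩ := h2 hix
        refine ⟨(⟨b, hbm⟩, v.2), ?_, ?_⟩
        · simp only [Set.mem_preimage, Set.mem_singleton_iff]
          apply Fin.ext
          rw [CC_val hm hn]
          simp only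
          rw [kol_low_val hm hn hbm v.2.isLt v.1.isLt (fun he => hbx (by omega)) hjd]
          omega
        · rw [kg_adj]
          right
          refine ⟨rfl, ?_⟩
          intro he
          exact hbx (congrArg Fin.val he).symm
      · -- some cell of the same row has color i
        obtain ⟨j, hjn, hjv⟩ := row_surj hm hn v.1.isLt i.isLt hix
        refine ⟨(v.1, ⟨j, hjn⟩), ?_, ?_⟩
        · simp only [Set.mem_preimage, Set.mem_singleton_iff]
          exact Fin.ext (by rw [CC_val hm hn]; exact hjv)
        · rw [kg_adj]
          left
          refine ⟨rfl, ?_⟩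
          intro he
          apply h0
          apply Fin.ext
          rw [CC_val hm hn]
          have : j = v.2.val := congrArg Fin.val he.symm
          rw [← this]
          exact hjv.symm

theorem upper_loc (hm : 2 ≤ m) (hn : m * m + m ≤ n + 1) :
    IsLocatingColoring (KG m n) (CC m n) := by
  have hmm : m ≤ m * m := Nat.le_mul_of_pos_left m (by omega)
  have hmsq : m * m ≤ n := by omega
  refine ⟨?_, ?_, ?_⟩
  · -- surjective
    intro i
    by_cases h0 : i.val = 0
    · have h1m : (1:ℕ) < m := by omega
      have h1n : (1:ℕ) < n := by omega
      refine ⟨(⟨1, h1m⟩, ⟨1, h1n⟩), ?_⟩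
      apply Fin.ext
      rw [CC_val hm hn]
      simp only
      rw [kol_low_val hm hn h1m h1n (by omega : (0:ℕ) < m) (by omega) (by omega)]
      omega
    · by_cases hxi : i.val < m
      · -- low color i: use row 0 if i ≠ 0 — i.val ≠ 0 here, row 0 works
        obtain ⟨j, hjn, hjv⟩ := row_surj hm hn (show (0:ℕ) < m by omega) i.isLt
          (by omega)
        exact ⟨(⟨0, by omega⟩, ⟨j, hjn⟩), Fin.ext (by rw [CC_val hm hn]; exact hjv)⟩
      · obtain ⟨j, hjn, hjv⟩ := row_surj hm hn (show (0:ℕ) < m by omega) i.isLt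
          (by omega)
        exact ⟨(⟨0, by omega⟩, ⟨j, hjn⟩), Fin.ext (by rw [CC_val hm hn]; exact hjv)⟩
  · -- proper
    intro u v hadj he
    have hev : kol m n u.1.val u.2.val = kol m n v.1.val v.2.val := by
      rw [← CC_val hm hn u, ← CC_val hm hn v, he]
    rcases kg_adj.mp hadj with ⟨he1, hne2⟩ | ⟨he2, hne1⟩
    · apply hne2
      apply Fin.ext
      apply kol_row_inj hm hn u.1.isLt u.2.isLt v.2.isLt
      rw [hev, he1]
    · apply hne1
      apply Fin.ext
      apply kol_col_inj hm hn u.1.isLt v.1.isLt u.2.isLt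
      rw [hev, he2]
  · -- codes injective
    intro u v he
    have hcol : CC m n u = CC m n v := by
      have h1 := congrFun he (CC m n u)
      rw [code_val hm hn, code_val hm hn, if_pos rfl] at h1
      by_contra hne
      rw [if_neg hne] at h1
      split_ifs at h1 <;> omega
    have hkol : kol m n u.1.val u.2.val = kol m n v.1.val v.2.val := by
      rw [← CC_val hm hn u, ← CC_val hm hn v, hcol]
    have hcux : kol m n u.1.val u.2.val ≠ u.1.val := kol_ne_x hm hn u.1.isLt u.2.isLt
    have hcvx : kol m n v.1.val v.2.val ≠ v.1.val := kol_ne_x hm hn v.1.isLt v.2.isLt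
    by_cases hcu : Cov m u <;> by_cases hcv : Cov m v
    · -- both covered: covered colors are globally distinct
      obtain ⟨b1, hb1, hbx1, hd1⟩ := hcu
      obtain ⟨b2, hb2, hbx2, hd2⟩ := hcv
      obtain ⟨hx12, hj12⟩ := kol_cov_inj hm hn u.1.isLt v.1.isLt u.2.isLt v.2.isLt
        hb1 (fun h => hbx1 h) hd1 hb2 (fun h => hbx2 h) hd2 hkol
      exact Prod.ext (Fin.ext hx12) (Fin.ext hj12)
    · -- u covered, v not: contradiction via the 2-entry of v's code
      exfalso
      have hvm : v.1.val < n + 1 := by omega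
      have h2 := congrFun he ⟨v.1.val, hvm⟩
      rw [code_val hm hn, code_val hm hn] at h2
      have hv2 : (if (⟨v.1.val, hvm⟩ : Fin (n+1)) = CC m n v then 0
          else if (⟨v.1.val, hvm⟩ : Fin (n+1)).val = v.1.val ∧ ¬ Cov m v then 2 else 1) = 2 := by
        rw [if_neg, if_pos ⟨rfl, hcv⟩]
        intro hh
        have := congrArg Fin.val hh
        rw [CC_val hm hn] at this
        exact hcvx this.symm
      rw [hv2] at h2
      by_cases hh : (⟨v.1.val, hvm⟩ : Fin (n+1)) = CC m n u
      · rw [if_pos hh] at h2; omega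
      · rw [if_neg hh] at h2
        split_ifs at h2 with hc
        · exact hc.2 hcu
        · omega
    · -- v covered, u not: symmetric
      exfalso
      have hum : u.1.val < n + 1 := by omega
      have h2 := congrFun he ⟨u.1.val, hum⟩
      rw [code_val hm hn, code_val hm hn] at h2
      have hu2 : (if (⟨u.1.val, hum⟩ : Fin (n+1)) = CC m n u then 0
          else if (⟨u.1.val, hum⟩ : Fin (n+1)).val = u.1.val ∧ ¬ Cov m u then 2 else 1) = 2 := by
        rw [if_neg, if_pos ⟨rfl, hcu⟩]
        intro hh
        have := congrArg Fin.val hh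
        rw [CC_val hm hn] at this
        exact hcux this.symm
      rw [hu2] at h2
      by_cases hh : (⟨u.1.val, hum⟩ : Fin (n+1)) = CC m n v
      · rw [if_pos hh] at h2; omega
      · rw [if_neg hh] at h2
        split_ifs at h2 with hc
        · exact hc.2 hcv
        · omega
    · -- both uncovered: the 2-entries give same row, then row injectivity
      have hum : u.1.val < n + 1 := by omega
      have h2 := congrFun he ⟨u.1.val, hum⟩
      rw [code_val hm hn, code_val hm hn] at h2
      have hu2 : (if (⟨u.1.val, hum⟩ : Fin (n+1)) = CC m n u then 0
          else if (⟨u.1.val, hum⟩ : Fin (n+1)).val = u.1.val ∧ ¬ Cov m u then 2 else 1) = 2 := by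
        rw [if_neg, if_pos ⟨rfl, hcu⟩]
        intro hh
        have := congrArg Fin.val hh
        rw [CC_val hm hn] at this
        exact hcux this.symm
      rw [hu2] at h2
      have hx12 : u.1.val = v.1.val := by
        by_cases hh : (⟨u.1.val, hum⟩ : Fin (n+1)) = CC m n v
        · rw [if_pos hh] at h2; omega
        · rw [if_neg hh] at h2
          split_ifs at h2 with hc
          · exact hc.1
          · omega
      have hj12 : u.2.val = v.2.val := by
        apply kol_row_inj hm hn u.1.isLt u.2.isLt v.2.isLt
        rw [hkol, hx12]
      exact Prod.ext (Fin.ext hx12) (Fin.ext hj12)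

end upper


section lower
open SimpleGraph
variable {m n : ℕ}

lemma lower_loc (hm : 2 ≤ m) (hmn : m ≤ n) (hn3 : 3 ≤ n) {k : ℕ}
    (c : Fin m × Fin n → Fin k) (h : IsLocatingColoring (KG m n) c) : n + 1 ≤ k := by
  obtain ⟨hsurj, hprop, hinj⟩ := h
  have hm0 : 0 < m := by omega
  have hn0 : 0 < n := by omega
  -- rows are injectively colored
  have hrowinj : ∀ x : Fin m, Function.Injective (fun j : Fin n => c (x, j)) := by
    intro x j1 j2 he
    by_contra hne
    have hadj : (KG m n).Adj (x, j1) (x, j2) := kg_adj.mpr (Or.inl ⟨rfl, by simpa using hne⟩)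
    exact hprop _ _ hadj he
  have hkn : n ≤ k := by
    have := Fintype.card_le_of_injective _ (hrowinj ⟨0, hm0⟩)
    simpa using this
  rcases Nat.lt_or_ge k (n + 1) with hlt | hge
  · exfalso
    have hkeq : k = n := by omega
    subst hkeq
    -- every row map is bijective
    have hrowsurj : ∀ x : Fin m, Function.Surjective (fun j : Fin k => c (x, j)) := by
      intro x
      have : Function.Bijective (fun j : Fin k => c (x, j)) :=
        (Fintype.bijective_iff_injective_and_card _).mpr ⟨hrowinj x, by simp⟩
      exact this.2
    -- all codes are determined by the color
    have hcode : ∀ v : Fin m × Fin k, ∀ i : Fin k,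
        colorCode (KG m k) c v i = if i = c v then 0 else 1 := by
      intro v i
      unfold colorCode
      by_cases h0 : i = c v
      · rw [if_pos h0]
        exact kg_setDist_zero (by simp [h0])
      · rw [if_neg h0]
        have hvnot : v ∉ c ⁻¹' {i} := by
          simp only [Set.mem_preimage, Set.mem_singleton_iff]
          exact fun he => h0 he.symm
        apply kg_setDist_one hvnot
        obtain ⟨j, hj⟩ := hrowsurj v.1 i
        refine ⟨(v.1, j), by simpa using hj, ?_⟩
        rw [kg_adj]
        left
        refine ⟨rfl, ?_⟩
        intro he
        apply h0
        have hvj : (v.1, j) = v := Prod.ext rfl he.symm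
        rw [← hj]
        simp only
        rw [hvj]
    -- two distinct vertices with equal codes
    set u : Fin m × Fin k := (⟨0, hm0⟩, ⟨0, hn0⟩) with hu
    obtain ⟨j1, hj1⟩ := hrowsurj ⟨1, by omega⟩ (c u)
    set w : Fin m × Fin k := (⟨1, by omega⟩, j1) with hw
    have hcw : c w = c u := hj1
    have hcodes : colorCode (KG m k) c u = colorCode (KG m k) c w := by
      funext i
      rw [hcode u i, hcode w i, hcw]
    have := hinj hcodes
    have h01 : u.1 = w.1 := congrArg Prod.fst this
    have : (0 : ℕ) = 1 := congrArg Fin.val h01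
    omega
  · omega

end lower

end Stmt11

/-- With `m_0 = max {k : k(k-1) - 1 ≤ n}`, if `2 ≤ m ≤ n`, `n ≥ 3`
and `m ≤ m_0 - 1`, then `χ_L(K_m □ K_n) = n + 1`. -/
theorem stmt11 (m n m₀ : ℕ) (hm : 2 ≤ m) (hmn : m ≤ n) (hn : 3 ≤ n)
    (hm₀ : IsGreatest {k : ℕ | k * (k - 1) - 1 ≤ n} m₀)
    (h : m ≤ m₀ - 1) :
    locatingChromaticNumber
      ((⊤ : SimpleGraph (Fin m)) □ (⊤ : SimpleGraph (Fin n))) = n + 1 := by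
  have hm₀m : m + 1 ≤ m₀ := by omega
  have hmul : (m + 1) * m ≤ m₀ * (m₀ - 1) := Nat.mul_le_mul hm₀m (by omega)
  have hm₀n : m₀ * (m₀ - 1) - 1 ≤ n := hm₀.1
  have hexp : (m + 1) * m = m * m + m := by ring
  have hnn : m * m + m ≤ n + 1 := by omega
  have hmem : (n + 1) ∈ {k : ℕ | ∃ c : Fin m × Fin n → Fin k,
      IsLocatingColoring ((⊤ : SimpleGraph (Fin m)) □ (⊤ : SimpleGraph (Fin n))) c} :=
    ⟨Stmt11.CC m n, Stmt11.upper_loc hm hnn⟩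
  unfold locatingChromaticNumber
  apply le_antisymm
  · exact Nat.sInf_le hmem
  · apply le_csInf ⟨n + 1, hmem⟩
    rintro k ⟨c, hc⟩
    exact Stmt11.lower_loc hm hmn hn c hc
end
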